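/- arXiv:1702.04296 — 4 statements merged into one kernel-verified Lean document; each statement's English description precedes it below -/
import Mathlib

section
/- The map Φ_{1/2} : RER_[2] → P({0,1}^2) is injective, while for every n ≥ 3 the map Φ_{1/2} : RER_[n] → P({0,1}^n) is not injective. -/
open scoped Classical BigOperators

noncomputable instance (n : ℕ) : Fintype (Setoid (Fin n)) :=
  Fintype.ofInjective (fun s : Setoid (Fin n) => s.r)
    (fun s t h => Setoid.ext fun a b => iff_of_eq (congrFun (congrFun h a) b))

/-- The weight a single block `B` receives in the color-process formula:
`p · 1[x ≡ 1 on B] + (1-p) · 1[x ≡ 0 on B]`. -/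
noncomputable def blockW (n : ℕ) (p : ℝ) (x : Fin n → Bool) (B : Set (Fin n)) : ℝ :=
  (if ∀ i ∈ B, x i = true then p else 0) + (if ∀ i ∈ B, x i = false then 1 - p else 0)

/-- The probability that the color process of the deterministic partition `π` equals `x`. -/
noncomputable def partW (n : ℕ) (p : ℝ) (π : Setoid (Fin n)) (x : Fin n → Bool) : ℝ :=
  ∏ᶠ B ∈ π.classes, blockW n p x B

/-- The color process `Φ_p(ν)` on `{0,1}^n`, given by its probability mass function. -/
noncomputable def Phi (n : ℕ) (p : ℝ) (ν : Setoid (Fin n) → ℝ) : (Fin n → Bool) → ℝ :=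
  fun x => ∑ π : Setoid (Fin n), ν π * partW n p π x

/-- `ν` is a probability measure on the set of partitions of `{1,…,n}` (an RER). -/
def IsRER (n : ℕ) (ν : Setoid (Fin n) → ℝ) : Prop :=
  (∀ π, 0 ≤ ν π) ∧ ∑ π : Setoid (Fin n), ν π = 1

/-- The action of a permutation of `{1,…,n}` on partitions of `{1,…,n}`. -/
def permSetoid {n : ℕ} (σ : Equiv.Perm (Fin n)) (π : Setoid (Fin n)) : Setoid (Fin n) where
  r a b := π.r (σ.symm a) (σ.symm b)
  iseqv := ⟨fun _ => π.iseqv.refl _, fun h => π.iseqv.symm h, fun h h' => π.iseqv.trans h h'⟩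

/-- `ν` is exchangeable: invariant under every permutation of `{1,…,n}`. -/
def IsExch (n : ℕ) (ν : Setoid (Fin n) → ℝ) : Prop :=
  ∀ (σ : Equiv.Perm (Fin n)) (π : Setoid (Fin n)), ν (permSetoid σ π) = ν π


-- key lemma: partW of a kernel setoid is a product of blockW of fibers
lemma classes_ker {α β : Type*} (c : α → β) :
    (Setoid.ker c).classes = (fun j => c ⁻¹' {j}) '' Set.range c := by
  ext s
  constructor
  · rintro ⟨y, rfl⟩
    exact ⟨c y, ⟨y, rfl⟩, by ext z; simp [Setoid.ker_def]⟩
  · rintro ⟨j, ⟨y, rfl⟩, rfl⟩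
    exact ⟨y, by ext z; simp [Setoid.ker_def]⟩

lemma blockW_empty (n : ℕ) (p : ℝ) (x : Fin n → Bool) : blockW n p x ∅ = 1 := by
  simp [blockW]

lemma partW_ker {n : ℕ} {β : Type*} [Fintype β] (p : ℝ) (c : Fin n → β) (x : Fin n → Bool) :
    partW n p (Setoid.ker c) x = ∏ j : β, blockW n p x (c ⁻¹' {j}) := by
  have hinj : Set.InjOn (fun j => c ⁻¹' {j}) (Set.range c) := by
    rintro j1 ⟨y1, rfl⟩ j2 ⟨y2, rfl⟩ h
    have hy : y1 ∈ (fun j => c ⁻¹' {j}) (c y2) := h ▸ rfl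
    exact Set.mem_singleton_iff.mp hy
  have h1 : partW n p (Setoid.ker c) x
      = ∏ᶠ j ∈ Set.range c, blockW n p x (c ⁻¹' {j}) := by
    rw [partW, classes_ker, finprod_mem_image hinj]
  rw [h1, finprod_mem_def, Set.mulIndicator_eq_self.2, finprod_eq_prod_of_fintype]
  intro j hj
  simp only [Function.mem_mulSupport] at hj
  by_contra hr
  apply hj
  have : c ⁻¹' {j} = ∅ := by
    ext z; simp only [Set.mem_preimage, Set.mem_singleton_iff, Set.mem_empty_iff_false, iff_false]
    exact fun h => hr ⟨z, h⟩
  rw [this, blockW_empty]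

lemma blockW_single {n : ℕ} (x : Fin n → Bool) (a : Fin n) :
    blockW n (1/2) x {a} = 1/2 := by
  simp only [blockW, Set.mem_singleton_iff, forall_eq]
  cases x a <;> norm_num

lemma blockW_pair {n : ℕ} (x : Fin n → Bool) (a b : Fin n) :
    blockW n (1/2) x {a, b} =
      (if x a = true ∧ x b = true then (1:ℝ)/2 else 0)
      + (if x a = false ∧ x b = false then (1:ℝ)/2 else 0) := by
  have h : ∀ c : Bool, (∀ i ∈ ({a, b} : Set (Fin n)), x i = c) ↔ (x a = c ∧ x b = c) := by
    intro c
    constructor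
    · intro h; exact ⟨h a (Or.inl rfl), h b (Or.inr rfl)⟩
    · rintro ⟨h1, h2⟩ i hi; rcases hi with rfl | rfl
      · exact h1
      · exact h2
  simp only [blockW]
  simp only [h true, h false]
  norm_num

lemma tri_iff {n : ℕ} (a0 a1 a2 : Fin n) (h0 : a0.val = 0) (h1 : a1.val = 1)
    (h2 : a2.val = 2) (x : Fin n → Bool) (c : Bool) :
    (∀ i ∈ {i : Fin n | i.val < 3}, x i = c) ↔ (x a0 = c ∧ x a1 = c ∧ x a2 = c) := by
  constructor
  · intro h
    exact ⟨h _ (by simp [h0]), h _ (by simp [h1]), h _ (by simp [h2])⟩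
  · rintro ⟨ha, hb, hc⟩ i hi
    have hi' : i.val = 0 ∨ i.val = 1 ∨ i.val = 2 := by
      simp only [Set.mem_setOf_eq] at hi; omega
    rcases hi' with h | h | h
    · have : i = a0 := Fin.ext (by omega)
      rw [this]; exact ha
    · have : i = a1 := Fin.ext (by omega)
      rw [this]; exact hb
    · have : i = a2 := Fin.ext (by omega)
      rw [this]; exact hc

lemma blockW_tri {n : ℕ} (a0 a1 a2 : Fin n) (h0 : a0.val = 0) (h1 : a1.val = 1)
    (h2 : a2.val = 2) (x : Fin n → Bool) :
    blockW n (1/2) x {i : Fin n | i.val < 3} =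
      (if x a0 = true ∧ x a1 = true ∧ x a2 = true then (1:ℝ)/2 else 0)
      + (if x a0 = false ∧ x a1 = false ∧ x a2 = false then (1:ℝ)/2 else 0) := by
  simp only [blockW]
  simp only [tri_iff a0 a1 a2 h0 h1 h2 x true, tri_iff a0 a1 a2 h0 h1 h2 x false]
  norm_num

lemma prod_split {n : ℕ} (a0 a1 a2 : Fin n) (h0 : a0.val = 0) (h1 : a1.val = 1)
    (h2 : a2.val = 2) (f : Fin n → ℝ)
    (hf : ∀ j : Fin n, 3 ≤ j.val → f j = 1/2) :
    ∏ j : Fin n, f j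
      = f a0 * f a1 * f a2
        * ∏ j ∈ (Finset.univ \ {a0, a1, a2} : Finset (Fin n)), (1/2 : ℝ) := by
  have hne01 : a0 ≠ a1 := fun h => by rw [Fin.ext_iff, h0, h1] at h; omega
  have hne02 : a0 ≠ a2 := fun h => by rw [Fin.ext_iff, h0, h2] at h; omega
  have hne12 : a1 ≠ a2 := fun h => by rw [Fin.ext_iff, h1, h2] at h; omega
  have hsub : ({a0, a1, a2} : Finset (Fin n)) ⊆ Finset.univ := Finset.subset_univ _
  rw [← Finset.prod_sdiff hsub]
  have hh1 : ∏ j ∈ (Finset.univ \ {a0, a1, a2} : Finset (Fin n)), f j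
      = ∏ j ∈ (Finset.univ \ {a0, a1, a2} : Finset (Fin n)), (1/2 : ℝ) := by
    apply Finset.prod_congr rfl
    intro j hj
    rw [Finset.mem_sdiff, Finset.mem_insert, Finset.mem_insert, Finset.mem_singleton] at hj
    apply hf
    by_contra hlt
    push_neg at hlt
    have : j.val = 0 ∨ j.val = 1 ∨ j.val = 2 := by omega
    rcases this with h | h | h
    · exact hj.2 (Or.inl (Fin.ext (by omega)))
    · exact hj.2 (Or.inr (Or.inl (Fin.ext (by omega))))
    · exact hj.2 (Or.inr (Or.inr (Fin.ext (by omega))))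
  have hh2 : ∏ j ∈ ({a0, a1, a2} : Finset (Fin n)), f j = f a0 * f a1 * f a2 := by
    rw [Finset.prod_insert (by simp [hne01, hne02]),
      Finset.prod_insert (by simp [hne12]), Finset.prod_singleton, mul_assoc]
  rw [hh1, hh2]; ring

lemma ker_ne {α β γ : Type*} {c : α → β} {d : α → γ} {u v : α}
    (h1 : c u = c v) (h2 : d u ≠ d v) : Setoid.ker c ≠ Setoid.ker d := by
  intro h
  have hr : (Setoid.ker c) u v := Setoid.ker_def.mpr h1
  rw [h] at hr
  exact h2 (Setoid.ker_def.mp hr)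


lemma fin2_cases (a : Fin 2) : a = 0 ∨ a = 1 := by omega

lemma setoid_fin2_classify (π : Setoid (Fin 2)) :
    π = Setoid.ker (id : Fin 2 → Fin 2) ∨ π = Setoid.ker (fun _ : Fin 2 => (0 : Fin 1)) := by
  by_cases h : π.r 0 1
  · right
    apply Setoid.ext
    intro a b
    simp only [Setoid.ker_def]
    constructor
    · intro _; trivial
    · intro _
      rcases fin2_cases a with rfl | rfl <;> rcases fin2_cases b with rfl | rfl
      · exact π.iseqv.refl _
      · exact h
      · exact π.iseqv.symm h
      · exact π.iseqv.refl _
  · left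
    apply Setoid.ext
    intro a b
    simp only [Setoid.ker_def, id]
    constructor
    · intro hab
      rcases fin2_cases a with rfl | rfl <;> rcases fin2_cases b with rfl | rfl
      · rfl
      · exact absurd hab h
      · exact absurd (π.iseqv.symm hab) h
      · rfl
    · rintro rfl; exact π.iseqv.refl _

lemma part_one (ν₁ ν₂ : Setoid (Fin 2) → ℝ) (h1 : IsRER 2 ν₁) (h2 : IsRER 2 ν₂)
    (hP : Phi 2 (1/2) ν₁ = Phi 2 (1/2) ν₂) : ν₁ = ν₂ := by
  set Ka := Setoid.ker (id : Fin 2 → Fin 2) with hKa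
  set Kb := Setoid.ker (fun _ : Fin 2 => (0 : Fin 1)) with hKb
  have hne : Ka ≠ Kb := by
    intro h
    have hr : Ka 0 1 := by rw [h]; exact Setoid.ker_def.mpr rfl
    have : (0 : Fin 2) = 1 := Setoid.ker_def.mp hr
    exact absurd this (by decide)
  have huniv : (Finset.univ : Finset (Setoid (Fin 2))) = {Ka, Kb} := by
    apply Finset.ext
    intro π
    simp only [Finset.mem_univ, true_iff, Finset.mem_insert, Finset.mem_singleton]
    exact setoid_fin2_classify π
  have hsum : ∀ f : Setoid (Fin 2) → ℝ, ∑ π : Setoid (Fin 2), f π = f Ka + f Kb := by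
    intro f
    rw [huniv, Finset.sum_pair hne]
  -- compute partW at x = const true
  set x : Fin 2 → Bool := fun _ => true with hx
  have pKa : partW 2 (1/2) Ka x = 1/4 := by
    rw [hKa, partW_ker, Fin.prod_univ_two]
    have : ∀ j : Fin 2, (id : Fin 2 → Fin 2) ⁻¹' {j} = {j} := fun j => by ext i; simp
    rw [this 0, this 1, blockW_single, blockW_single]
    norm_num
  have pKb : partW 2 (1/2) Kb x = 1/2 := by
    rw [hKb, partW_ker, Fin.prod_univ_one]
    have : (fun _ : Fin 2 => (0 : Fin 1)) ⁻¹' {0} = Set.univ := by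
      ext i; simp
    rw [this]
    simp [blockW, hx]
  have key := congrFun hP x
  simp only [Phi, hsum, pKa, pKb] at key
  have s1 : ν₁ Ka + ν₁ Kb = 1 := by rw [← hsum]; exact h1.2
  have s2 : ν₂ Ka + ν₂ Kb = 1 := by rw [← hsum]; exact h2.2
  have ea : ν₁ Ka = ν₂ Ka := by linarith
  have eb : ν₁ Kb = ν₂ Kb := by linarith
  funext π
  rcases setoid_fin2_classify π with h | h
  · rw [← hKa] at h; rw [h, ea]
  · rw [← hKb] at h; rw [h, eb]


lemma part_two (n : ℕ) (hn : 3 ≤ n) :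
    ∃ ν₁ ν₂ : Setoid (Fin n) → ℝ,
      IsRER n ν₁ ∧ IsRER n ν₂ ∧ ν₁ ≠ ν₂ ∧ Phi n (1/2) ν₁ = Phi n (1/2) ν₂ := by
  set a0 : Fin n := ⟨0, by omega⟩ with ha0
  set a1 : Fin n := ⟨1, by omega⟩ with ha1
  set a2 : Fin n := ⟨2, by omega⟩ with ha2
  have hne01 : a0 ≠ a1 := by simp [ha0, ha1, Fin.ext_iff]
  have hne02 : a0 ≠ a2 := by simp [ha0, ha2, Fin.ext_iff]
  have hne12 : a1 ≠ a2 := by simp [ha1, ha2, Fin.ext_iff]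
  set cA : Fin n → Fin n := fun i => if i.val < 3 then a0 else i with hcA
  set m01 : Fin n → Fin n := fun i => if i = a0 then a1 else i with hm01
  set m02 : Fin n → Fin n := fun i => if i = a0 then a2 else i with hm02
  set m12 : Fin n → Fin n := fun i => if i = a1 then a2 else i with hm12
  set KA := Setoid.ker cA with hKA
  set KC := Setoid.ker (id : Fin n → Fin n) with hKC
  set K01 := Setoid.ker m01 with hK01
  set K02 := Setoid.ker m02 with hK02
  set K12 := Setoid.ker m12 with hK12
  -- distinctness facts
  have hcA0 : cA a0 = a0 := by simp [hcA, ha0]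
  have hcA1 : cA a1 = a0 := by simp [hcA, ha1]
  have hcA2 : cA a2 = a0 := by simp [hcA, ha2]
  have hAC : KA ≠ KC := ker_ne (hcA0.trans hcA1.symm) (by simpa using hne01)
  have hA01 : KA ≠ K01 := ker_ne (hcA0.trans hcA2.symm)
    (by simp [hm01, hne02.symm]; exact fun h => hne12 h)
  have hA02 : KA ≠ K02 := ker_ne (hcA0.trans hcA1.symm)
    (by simp [hm02, hne01.symm]; exact fun h => hne12 h.symm)
  have hA12 : KA ≠ K12 := ker_ne (hcA0.trans hcA1.symm)
    (by simp [hm12, hne01]; exact fun h => hne02 h)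
  refine ⟨fun π => (if π = KA then (1:ℝ)/3 else 0) + (if π = KC then 2/3 else 0),
    fun π => (if π = K01 then (1:ℝ)/3 else 0) + (if π = K02 then 1/3 else 0)
      + (if π = K12 then 1/3 else 0), ⟨?_, ?_⟩, ⟨?_, ?_⟩, ?_, ?_⟩
  · intro π; dsimp only; split_ifs <;> norm_num
  · rw [Finset.sum_add_distrib, Finset.sum_ite_eq' Finset.univ KA fun _ => (1:ℝ)/3,
      Finset.sum_ite_eq' Finset.univ KC fun _ => (2:ℝ)/3]
    norm_num
  · intro π; dsimp only; split_ifs <;> norm_num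
  · rw [Finset.sum_add_distrib, Finset.sum_add_distrib,
      Finset.sum_ite_eq' Finset.univ K01 fun _ => (1:ℝ)/3,
      Finset.sum_ite_eq' Finset.univ K02 fun _ => (1:ℝ)/3,
      Finset.sum_ite_eq' Finset.univ K12 fun _ => (1:ℝ)/3]
    norm_num
  · intro h
    have := congrFun h KA
    simp [if_neg hAC, if_neg hA01, if_neg hA02, if_neg hA12] at this
  · funext x
    -- reduce Phi to finitely supported sums
    have expand : ∀ (K : Setoid (Fin n)) (c : ℝ),
        ∑ π : Setoid (Fin n), (if π = K then c else 0) * partW n (1/2) π x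
          = c * partW n (1/2) K x := by
      intro K c
      rw [Finset.sum_congr rfl (fun π _ => by
        rw [ite_mul, zero_mul] : ∀ π ∈ Finset.univ,
          (if π = K then c else 0) * partW n (1/2) π x
            = if π = K then c * partW n (1/2) π x else 0)]
      rw [Finset.sum_ite_eq' Finset.univ K fun π => c * partW n (1/2) π x]
      simp
    have e1 : Phi n (1/2) (fun π => (if π = KA then (1:ℝ)/3 else 0)
        + (if π = KC then 2/3 else 0)) x
        = 1/3 * partW n (1/2) KA x + 2/3 * partW n (1/2) KC x := by
      simp only [Phi, add_mul, Finset.sum_add_distrib, expand]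
    have e2 : Phi n (1/2) (fun π => (if π = K01 then (1:ℝ)/3 else 0)
        + (if π = K02 then 1/3 else 0) + (if π = K12 then 1/3 else 0)) x
        = 1/3 * partW n (1/2) K01 x + 1/3 * partW n (1/2) K02 x
          + 1/3 * partW n (1/2) K12 x := by
      simp only [Phi, add_mul, Finset.sum_add_distrib, expand]
    rw [e1, e2]
    -- fiber computations
    have fibC : ∀ j : Fin n, (id : Fin n → Fin n) ⁻¹' {j} = {j} := fun j => by
      ext i; simp
    have fibA0 : cA ⁻¹' {a0} = {i : Fin n | i.val < 3} := by
      ext i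
      simp only [Set.mem_preimage, Set.mem_singleton_iff, Set.mem_setOf_eq, hcA]
      by_cases h : i.val < 3 <;> simp [h, Fin.ext_iff, ha0] <;> omega
    have fibA : ∀ j : Fin n, 1 ≤ j.val → j.val < 3 → cA ⁻¹' {j} = ∅ := by
      intro j h1 h3
      ext i
      simp only [Set.mem_preimage, Set.mem_singleton_iff, Set.mem_empty_iff_false, iff_false, hcA]
      by_cases h : i.val < 3 <;> simp [h, Fin.ext_iff, ha0] <;> omega
    have fibA' : ∀ j : Fin n, 3 ≤ j.val → cA ⁻¹' {j} = {j} := by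
      intro j h3
      ext i
      simp only [Set.mem_preimage, Set.mem_singleton_iff, hcA]
      by_cases h : i.val < 3 <;> simp [h, Fin.ext_iff, ha0] <;> omega
    -- generic merge fibers
    have fibM : ∀ (a b : Fin n), a ≠ b →
        ((fun i => if i = a then b else i) ⁻¹' {a} = ∅
        ∧ (fun i => if i = a then b else i) ⁻¹' {b} = {a, b}
        ∧ ∀ j : Fin n, j ≠ a → j ≠ b → (fun i => if i = a then b else i) ⁻¹' {j} = {j}) := by
      intro a b hab
      refine ⟨?_, ?_, ?_⟩
      · ext i
        simp only [Set.mem_preimage, Set.mem_singleton_iff, Set.mem_empty_iff_false, iff_false]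
        by_cases h : i = a <;> simp [h, hab.symm, Ne.symm hab]
      · ext i
        simp only [Set.mem_preimage, Set.mem_singleton_iff, Set.mem_insert_iff]
        by_cases h : i = a <;> simp [h]
      · intro j hja hjb
        ext i
        simp only [Set.mem_preimage, Set.mem_singleton_iff]
        by_cases h : i = a <;> simp [h, Ne.symm hjb, Ne.symm hja]
    -- blockW of fibers, assembled
    have h0 : a0.val = 0 := rfl
    have h1 : a1.val = 1 := rfl
    have h2 : a2.val = 2 := rfl
    obtain ⟨g01a, g01b, g01c⟩ := fibM a0 a1 hne01
    obtain ⟨g02a, g02b, g02c⟩ := fibM a0 a2 hne02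
    obtain ⟨g12a, g12b, g12c⟩ := fibM a1 a2 hne12
    have FA1 : cA ⁻¹' {a1} = ∅ := fibA a1 (by omega) (by omega)
    have FA2 : cA ⁻¹' {a2} = ∅ := fibA a2 (by omega) (by omega)
    have G01 : m01 ⁻¹' {a2} = {a2} := g01c a2 hne02.symm hne12.symm
    have G02 : m02 ⁻¹' {a1} = {a1} := g02c a1 hne01.symm hne12
    have G12 : m12 ⁻¹' {a0} = {a0} := g12c a0 hne01 hne02
    have hfC : ∀ j : Fin n, 3 ≤ j.val →
        blockW n (1/2) x ((id : Fin n → Fin n) ⁻¹' {j}) = 1/2 := by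
      intro j hj; rw [fibC, blockW_single]
    have hfA : ∀ j : Fin n, 3 ≤ j.val → blockW n (1/2) x (cA ⁻¹' {j}) = 1/2 := by
      intro j hj; rw [fibA' j hj, blockW_single]
    have hf01 : ∀ j : Fin n, 3 ≤ j.val → blockW n (1/2) x (m01 ⁻¹' {j}) = 1/2 := by
      intro j hj
      rw [g01c j (fun h => by rw [h, h0] at hj; omega) (fun h => by rw [h, h1] at hj; omega),
        blockW_single]
    have hf02 : ∀ j : Fin n, 3 ≤ j.val → blockW n (1/2) x (m02 ⁻¹' {j}) = 1/2 := by
      intro j hj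
      rw [g02c j (fun h => by rw [h, h0] at hj; omega) (fun h => by rw [h, h2] at hj; omega),
        blockW_single]
    have hf12 : ∀ j : Fin n, 3 ≤ j.val → blockW n (1/2) x (m12 ⁻¹' {j}) = 1/2 := by
      intro j hj
      rw [g12c j (fun h => by rw [h, h1] at hj; omega) (fun h => by rw [h, h2] at hj; omega),
        blockW_single]
    rw [hKA, hKC, hK01, hK02, hK12, partW_ker, partW_ker, partW_ker, partW_ker, partW_ker,
      prod_split a0 a1 a2 h0 h1 h2 _ hfA,
      prod_split a0 a1 a2 h0 h1 h2 _ hfC,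
      prod_split a0 a1 a2 h0 h1 h2 _ hf01,
      prod_split a0 a1 a2 h0 h1 h2 _ hf02,
      prod_split a0 a1 a2 h0 h1 h2 _ hf12]
    simp only [fibC, fibA0, FA1, FA2, (show m01 ⁻¹' {a0} = ∅ from g01a), (show m01 ⁻¹' {a1} = {a0, a1} from g01b), G01,
      (show m02 ⁻¹' {a0} = ∅ from g02a), (show m02 ⁻¹' {a2} = {a0, a2} from g02b), G02,
      (show m12 ⁻¹' {a1} = ∅ from g12a), (show m12 ⁻¹' {a2} = {a1, a2} from g12b), G12,
      blockW_empty, blockW_single, blockW_pair,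
      blockW_tri a0 a1 a2 h0 h1 h2 x]
    cases hx0 : x a0 <;> cases hx1 : x a1 <;> cases hx2 : x a2 <;>
      simp [hx0, hx1, hx2] <;> ring



/-- **Theorem (Steif–Tykesson, Theorem 2.1(A)).**
The map `Φ_{1/2} : RER_[2] → P({0,1}^2)` is injective, while for every `n ≥ 3` the map
`Φ_{1/2} : RER_[n] → P({0,1}^n)` is not injective. -/
theorem Phi_half_injective_iff_n_le_two :
    (∀ ν₁ ν₂ : Setoid (Fin 2) → ℝ, IsRER 2 ν₁ → IsRER 2 ν₂ →
        Phi 2 (1/2) ν₁ = Phi 2 (1/2) ν₂ → ν₁ = ν₂) ∧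
    (∀ n : ℕ, 3 ≤ n → ∃ ν₁ ν₂ : Setoid (Fin n) → ℝ,
        IsRER n ν₁ ∧ IsRER n ν₂ ∧ ν₁ ≠ ν₂ ∧ Phi n (1/2) ν₁ = Phi n (1/2) ν₂) := by
  exact ⟨part_one, part_two⟩
end

section
/- The restriction of Φ_{1/2} to RER_[2]^{exch} is injective, while for every n ≥ 3 the restriction of Φ_{1/2} to RER_[n]^{exch} is not injective. -/
open scoped Classical BigOperators

/-! ### Auxiliary definitions and lemmas -/

/-- The partition of `Fin n` with `S` as one block and singletons elsewhere. -/
def sos {n : ℕ} (S : Finset (Fin n)) : Setoid (Fin n) where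
  r a b := a = b ∨ (a ∈ S ∧ b ∈ S)
  iseqv := by
    refine ⟨fun a => Or.inl rfl, ?_, ?_⟩
    · rintro a b (rfl | ⟨h1, h2⟩); · exact Or.inl rfl
      · exact Or.inr ⟨h2, h1⟩
    · rintro a b c (rfl | ⟨h1, h2⟩) h; · exact h
      · rcases h with rfl | ⟨h3, h4⟩
        · exact Or.inr ⟨h1, h2⟩
        · exact Or.inr ⟨h1, h4⟩

lemma sos_rel {n : ℕ} (S : Finset (Fin n)) (a b : Fin n) :
    (sos S).r a b ↔ a = b ∨ (a ∈ S ∧ b ∈ S) := Iff.rfl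

lemma permSetoid_sos {n : ℕ} (σ : Equiv.Perm (Fin n)) (S : Finset (Fin n)) :
    permSetoid σ (sos S) = sos (S.image σ) := by
  apply Setoid.ext
  intro a b
  show (σ.symm a = σ.symm b ∨ (σ.symm a ∈ S ∧ σ.symm b ∈ S)) ↔ _
  rw [sos_rel]
  have hmem : ∀ c : Fin n, c ∈ S.image σ ↔ σ.symm c ∈ S := by
    intro c
    simp only [Finset.mem_image]
    constructor
    · rintro ⟨i, hi, rfl⟩; simpa using hi
    · intro h; exact ⟨_, h, by simp⟩
  rw [hmem, hmem, σ.symm.injective.eq_iff]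

lemma permSetoid_bot {n : ℕ} (σ : Equiv.Perm (Fin n)) :
    permSetoid σ (⊥ : Setoid (Fin n)) = ⊥ := by
  apply Setoid.ext
  intro a b
  show σ.symm a = σ.symm b ↔ _
  rw [σ.symm.injective.eq_iff]
  exact Iff.rfl

lemma permSetoid_cancel {n : ℕ} (σ : Equiv.Perm (Fin n)) (π : Setoid (Fin n)) :
    permSetoid σ.symm (permSetoid σ π) = π := by
  apply Setoid.ext; intro a b
  show π.r (σ.symm (σ.symm.symm a)) _ ↔ _
  simp

lemma permSetoid_eq_iff {n : ℕ} (σ : Equiv.Perm (Fin n)) (π ρ : Setoid (Fin n)) :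
    permSetoid σ π = ρ ↔ π = permSetoid σ.symm ρ := by
  constructor
  · rintro rfl; exact (permSetoid_cancel σ π).symm
  · rintro rfl
    have := permSetoid_cancel σ.symm ρ
    simpa using this

lemma blockW_singleton (n : ℕ) (x : Fin n → Bool) (j : Fin n) :
    blockW n (1/2) x ({j} : Set (Fin n)) = 1/2 := by
  unfold blockW
  cases hx : x j <;> simp [hx] <;> norm_num

lemma classes_bot (n : ℕ) : (⊥ : Setoid (Fin n)).classes =
    ↑(Finset.univ.image fun j : Fin n => ({j} : Set (Fin n))) := by
  ext B
  constructor
  · rintro ⟨y, rfl⟩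
    simp only [Finset.coe_image, Set.mem_image]
    refine ⟨y, by simp, ?_⟩
    ext z
    simp [Setoid.bot_def]
  · intro hB
    simp only [Finset.coe_image, Set.mem_image] at hB
    obtain ⟨j, -, rfl⟩ := hB
    exact ⟨j, by ext z; simp [Setoid.bot_def]⟩

lemma partW_bot (n : ℕ) (x : Fin n → Bool) :
    partW n (1/2) ⊥ x = (1/2)^n := by
  rw [partW, classes_bot, finprod_mem_coe_finset, Finset.prod_image
    (by intro a _ b _ h; exact Set.singleton_eq_singleton_iff.mp h)]
  rw [Finset.prod_congr rfl (fun j _ => blockW_singleton n x j)]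
  simp

lemma classes_sos {n : ℕ} (S : Finset (Fin n)) (hS : S.Nonempty) :
    (sos S).classes =
      ↑(insert (↑S : Set (Fin n)) ((Sᶜ).image fun j => ({j} : Set (Fin n)))) := by
  have hr : ∀ a b : Fin n, (sos S) a b ↔ (a = b ∨ (a ∈ S ∧ b ∈ S)) := fun _ _ => Iff.rfl
  ext B
  simp only [Finset.coe_insert, Finset.coe_image, Set.mem_insert_iff, Set.mem_image]
  constructor
  · rintro ⟨y, rfl⟩
    by_cases hy : y ∈ S
    · left
      ext z
      simp only [Set.mem_setOf_eq, hr, Finset.mem_coe]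
      constructor
      · rintro (rfl | ⟨hz, -⟩) <;> assumption
      · intro hz; exact Or.inr ⟨hz, hy⟩
    · right
      refine ⟨y, by simpa, ?_⟩
      ext z
      simp only [Set.mem_setOf_eq, hr, Set.mem_singleton_iff]
      tauto
  · rintro (rfl | ⟨j, hj, rfl⟩)
    · obtain ⟨y, hy⟩ := hS
      refine ⟨y, ?_⟩
      ext z
      simp only [Set.mem_setOf_eq, hr, Finset.mem_coe]
      constructor
      · intro hz; exact Or.inr ⟨hz, hy⟩
      · rintro (rfl | ⟨hz, -⟩) <;> assumption
    · simp only [Finset.mem_coe, Finset.mem_compl] at hj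
      refine ⟨j, ?_⟩
      ext z
      simp only [Set.mem_setOf_eq, hr, Set.mem_singleton_iff]
      tauto

lemma sos_coe_not_mem {n : ℕ} (S : Finset (Fin n)) :
    (↑S : Set (Fin n)) ∉ (Sᶜ).image fun j => ({j} : Set (Fin n)) := by
  intro h
  simp only [Finset.mem_image] at h
  obtain ⟨j, hj, hEq⟩ := h
  have : j ∈ (↑S : Set (Fin n)) := by rw [← hEq]; exact rfl
  simp only [Finset.mem_coe] at this
  exact (Finset.mem_compl.mp hj) this

lemma partW_sos {n : ℕ} (S : Finset (Fin n)) (hS : S.Nonempty) (x : Fin n → Bool) :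
    partW n (1/2) (sos S) x = blockW n (1/2) x ↑S * (1/2)^(n - S.card) := by
  rw [partW, classes_sos S hS, finprod_mem_coe_finset,
    Finset.prod_insert (sos_coe_not_mem S), Finset.prod_image
    (by intro a _ b _ h; exact Set.singleton_eq_singleton_iff.mp h)]
  rw [Finset.prod_congr rfl (fun j _ => blockW_singleton n x j)]
  simp [Finset.card_compl]

lemma sos_ne_bot {n : ℕ} (S : Finset (Fin n)) (hS : 2 ≤ S.card) :
    sos S ≠ ⊥ := by
  intro h
  obtain ⟨a, ha, b, hb, hab⟩ := Finset.one_lt_card.mp hS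
  have hr : (sos S).r a b := Or.inr ⟨ha, hb⟩
  rw [h] at hr
  exact hab hr

lemma sum_ite_mul_swap {α β : Type*} [Fintype α] (P : Finset β) (g : β → α) (w : ℝ)
    (F : α → ℝ) :
    ∑ a : α, (∑ S ∈ P, if a = g S then w else 0) * F a = ∑ S ∈ P, w * F (g S) := by
  calc ∑ a : α, (∑ S ∈ P, if a = g S then w else 0) * F a
      = ∑ a : α, ∑ S ∈ P, (if a = g S then w * F a else 0) := by
        refine Finset.sum_congr rfl fun a _ => ?_
        rw [Finset.sum_mul]
        refine Finset.sum_congr rfl fun S _ => ?_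
        by_cases h : a = g S <;> simp [h]
    _ = ∑ S ∈ P, ∑ a : α, (if a = g S then w * F a else 0) := Finset.sum_comm
    _ = ∑ S ∈ P, w * F (g S) := by
        refine Finset.sum_congr rfl fun S _ => ?_
        simp [Finset.sum_ite_eq']

lemma single_ite_mul {α : Type*} [Fintype α] (b : α) (w : ℝ) (F : α → ℝ) :
    ∑ a : α, (if a = b then w else 0) * F a = w * F b := by
  simp [ite_mul, Finset.sum_ite_eq']

lemma cast_choose_three (t : ℕ) :
    ((t.choose 3 : ℕ) : ℝ) = t * (t - 1) * (t - 2) / 6 := by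
  induction t with
  | zero => simp
  | succ t ih =>
    have h : (t + 1).choose 3 = t.choose 2 + t.choose 3 := Nat.choose_succ_succ t 2
    rw [h]
    push_cast
    rw [ih, Nat.cast_choose_two]
    ring

lemma sum_blockW {n : ℕ} (c : ℕ) (hc : 1 ≤ c) (x : Fin n → Bool) :
    ∑ S ∈ (Finset.univ.powersetCard c : Finset (Finset (Fin n))), blockW n (1/2) x ↑S
      = (1/2) * (((Finset.univ.filter fun i : Fin n => x i = true).card.choose c : ℝ)
          + ((Finset.univ.filter fun i : Fin n => x i = false).card.choose c : ℝ)) := by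
  have key : ∀ (b : Bool),
      ∑ S ∈ (Finset.univ.powersetCard c : Finset (Finset (Fin n))),
          (if ∀ i ∈ (↑S : Set (Fin n)), x i = b then (1/2:ℝ) else 0)
        = (1/2) * ((Finset.univ.filter fun i : Fin n => x i = b).card.choose c : ℝ) := by
    intro b
    set T := Finset.univ.filter fun i : Fin n => x i = b with hT
    have hcond : ∀ S : Finset (Fin n), (∀ i ∈ (↑S : Set (Fin n)), x i = b) ↔ S ⊆ T := by
      intro S
      simp only [hT, Finset.subset_iff, Finset.mem_filter, Finset.mem_univ, true_and,
        Finset.mem_coe]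
    calc ∑ S ∈ (Finset.univ.powersetCard c : Finset (Finset (Fin n))),
          (if ∀ i ∈ (↑S : Set (Fin n)), x i = b then (1/2:ℝ) else 0)
        = ∑ S ∈ (Finset.univ.powersetCard c : Finset (Finset (Fin n))),
          (if S ⊆ T then (1/2:ℝ) else 0) := by
          refine Finset.sum_congr rfl fun S _ => ?_
          rw [if_congr (hcond S) rfl rfl]
      _ = ∑ S ∈ (Finset.univ.powersetCard c).filter (fun S => S ⊆ T), (1/2:ℝ) := by
          rw [Finset.sum_filter]
      _ = (1/2) * (T.card.choose c : ℝ) := by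
          have : (Finset.univ.powersetCard c).filter (fun S => S ⊆ T) = T.powersetCard c := by
            ext S
            simp only [Finset.mem_filter, Finset.mem_powersetCard, Finset.subset_univ, true_and]
            tauto
          rw [this, Finset.sum_const, Finset.card_powersetCard]
          simp [mul_comm]
  have expand : ∀ S : Finset (Fin n), blockW n (1/2) x ↑S
      = (if ∀ i ∈ (↑S : Set (Fin n)), x i = true then (1/2:ℝ) else 0)
        + (if ∀ i ∈ (↑S : Set (Fin n)), x i = false then (1/2:ℝ) else 0) := by
    intro S
    unfold blockW
    norm_num
  rw [Finset.sum_congr rfl fun S _ => expand S, Finset.sum_add_distrib, key true, key false]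
  ring

lemma card_powersetCard_univ (n c : ℕ) :
    (Finset.univ.powersetCard c : Finset (Finset (Fin n))).card = n.choose c := by
  rw [Finset.card_powersetCard, Finset.card_univ, Fintype.card_fin]

lemma sum_sum_ite {α β : Type*} [Fintype α] (P : Finset β) (g : β → α) (w : ℝ) :
    ∑ a : α, ∑ S ∈ P, (if a = g S then w else 0) = P.card * w := by
  rw [Finset.sum_comm]
  have : ∀ S : β, ∑ a : α, (if a = g S then w else 0) = w := by
    intro S
    simp [Finset.sum_ite_eq']
  rw [Finset.sum_congr rfl fun S _ => this S, Finset.sum_const]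
  simp

lemma sum_ite_perm {n c : ℕ} (σ : Equiv.Perm (Fin n)) (π : Setoid (Fin n)) (w : ℝ) :
    ∑ S ∈ Finset.univ.powersetCard c, (if permSetoid σ π = sos S then w else 0)
      = ∑ S ∈ Finset.univ.powersetCard c, (if π = sos S then w else 0) := by
  refine Finset.sum_bij' (fun S _ => S.image σ.symm) (fun S _ => S.image σ) ?_ ?_ ?_ ?_ ?_
  · intro S hS
    simp only [Finset.mem_powersetCard, Finset.subset_univ, true_and] at hS ⊢
    rw [Finset.card_image_of_injective _ σ.symm.injective, hS]
  · intro S hS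
    simp only [Finset.mem_powersetCard, Finset.subset_univ, true_and] at hS ⊢
    rw [Finset.card_image_of_injective _ σ.injective, hS]
  · intro S _
    ext a; simp
  · intro S _
    ext a; simp
  · intro S _
    have : permSetoid σ π = sos S ↔ π = sos (S.image σ.symm) := by
      rw [permSetoid_eq_iff, permSetoid_sos]
    rw [if_congr this rfl rfl]

lemma setoid_fin2 (π : Setoid (Fin 2)) : π = ⊥ ∨ π = ⊤ := by
  by_cases h : π.r 0 1
  · right
    apply Setoid.ext
    intro a b
    simp only [Setoid.top_def, Pi.top_apply, Prop.top_eq_true, iff_true]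
    fin_cases a <;> fin_cases b
    · exact π.iseqv.refl _
    · exact h
    · exact π.iseqv.symm h
    · exact π.iseqv.refl _
  · left
    apply Setoid.ext
    intro a b
    rw [show ((⊥ : Setoid (Fin 2)) a b) = (a = b) from congrFun (congrFun Setoid.bot_def a) b]
    constructor
    · intro hr
      by_contra hne
      have h2 : ∀ a b : Fin 2, a ≠ b → (a = 0 ∧ b = 1) ∨ (a = 1 ∧ b = 0) := by decide
      rcases h2 a b hne with ⟨rfl, rfl⟩ | ⟨rfl, rfl⟩
      · exact h hr
      · exact h (π.iseqv.symm hr)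
    · rintro rfl
      exact π.iseqv.refl a

lemma bot_ne_top_fin2 : (⊥ : Setoid (Fin 2)) ≠ ⊤ := by
  intro h
  have : (⊥ : Setoid (Fin 2)) 0 1 := by
    rw [h]
    simp [Setoid.top_def]
  rw [Setoid.bot_def] at this
  exact absurd this (by decide)

lemma top_eq_sos_univ : (⊤ : Setoid (Fin 2)) = sos Finset.univ := by
  apply Setoid.ext
  intro a b
  rw [sos_rel]
  simp [Setoid.top_def]

/-- **Theorem (Steif–Tykesson, Theorem 2.1(B)).**
The restriction of `Φ_{1/2}` to `RER_[2]^{exch}` is injective, while for every `n ≥ 3`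
the restriction of `Φ_{1/2}` to `RER_[n]^{exch}` is not injective. -/
theorem Phi_half_exch_injective_iff_n_le_two :
    (∀ ν₁ ν₂ : Setoid (Fin 2) → ℝ, IsRER 2 ν₁ → IsExch 2 ν₁ → IsRER 2 ν₂ → IsExch 2 ν₂ →
        Phi 2 (1/2) ν₁ = Phi 2 (1/2) ν₂ → ν₁ = ν₂) ∧
    (∀ n : ℕ, 3 ≤ n → ∃ ν₁ ν₂ : Setoid (Fin n) → ℝ,
        IsRER n ν₁ ∧ IsExch n ν₁ ∧ IsRER n ν₂ ∧ IsExch n ν₂ ∧ ν₁ ≠ ν₂ ∧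
        Phi n (1/2) ν₁ = Phi n (1/2) ν₂) := by
  constructor
  · -- n = 2 : injectivity
    intro ν₁ ν₂ h₁ _ h₂ _ hΦ
    have huniv : (Finset.univ : Finset (Setoid (Fin 2))) = {⊥, ⊤} := by
      ext π
      simp only [Finset.mem_univ, true_iff, Finset.mem_insert, Finset.mem_singleton]
      exact setoid_fin2 π
    have hPhi : ∀ ν : Setoid (Fin 2) → ℝ, ∀ x,
        Phi 2 (1/2) ν x = ν ⊥ * partW 2 (1/2) ⊥ x + ν ⊤ * partW 2 (1/2) ⊤ x := by
      intro ν x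
      rw [Phi, huniv, Finset.sum_insert (by simpa using bot_ne_top_fin2), Finset.sum_singleton]
    have hx0 : partW 2 (1/2) ⊤ (![true, false]) = 0 := by
      rw [top_eq_sos_univ, partW_sos _ (by simp) _]
      have : blockW 2 (1/2) (![true, false]) ↑(Finset.univ : Finset (Fin 2)) = 0 := by
        unfold blockW
        rw [if_neg, if_neg]
        · norm_num
        · intro h
          have := h 0 (by simp)
          simp at this
        · intro h
          have := h 1 (by simp)
          simp at this
      rw [this, zero_mul]
    have hbot : ν₁ ⊥ = ν₂ ⊥ := by
      have := congrFun hΦ (![true, false])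
      rw [hPhi ν₁, hPhi ν₂, hx0, partW_bot] at this
      norm_num at this
      linarith
    have hsum : ∀ ν : Setoid (Fin 2) → ℝ, (∑ π : Setoid (Fin 2), ν π) = ν ⊥ + ν ⊤ := by
      intro ν
      rw [huniv, Finset.sum_insert (by simpa using bot_ne_top_fin2), Finset.sum_singleton]
    have htop : ν₁ ⊤ = ν₂ ⊤ := by
      have e1 := h₁.2
      have e2 := h₂.2
      rw [hsum] at e1 e2
      linarith
    funext π
    rcases setoid_fin2 π with rfl | rfl
    · exact hbot
    · exact htop
  · -- n ≥ 3 : non-injectivity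
    intro n hn
    have hC3 : (0:ℝ) < (n.choose 3 : ℝ) := by
      exact_mod_cast Nat.choose_pos hn
    have hC2 : (0:ℝ) < (n.choose 2 : ℝ) := by
      exact_mod_cast Nat.choose_pos (by omega)
    set P3 := (Finset.univ.powersetCard 3 : Finset (Finset (Fin n))) with hP3
    set P2 := (Finset.univ.powersetCard 2 : Finset (Finset (Fin n))) with hP2
    set w3 : ℝ := 1 / (3 * (n.choose 3 : ℝ)) with hw3
    set w2 : ℝ := 1 / (n.choose 2 : ℝ) with hw2
    have hw3pos : 0 ≤ w3 := by positivity
    have hw2pos : 0 ≤ w2 := by positivity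
    refine ⟨fun π => (if π = ⊥ then 2/3 else 0) + ∑ S ∈ P3, (if π = sos S then w3 else 0),
           fun π => ∑ S ∈ P2, (if π = sos S then w2 else 0),
           ⟨?_, ?_⟩, ?_, ⟨?_, ?_⟩, ?_, ?_, ?_⟩
    · -- ν₁ nonneg
      intro π
      apply add_nonneg
      · split_ifs <;> norm_num
      · exact Finset.sum_nonneg fun S _ => by split_ifs <;> simp [hw3pos]
    · -- ν₁ sums to 1
      rw [Finset.sum_add_distrib]
      rw [Finset.sum_ite_eq' Finset.univ (⊥ : Setoid (Fin n)) (fun _ => (2/3 : ℝ))]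
      rw [sum_sum_ite P3 sos w3]
      rw [hP3, card_powersetCard_univ]
      simp only [Finset.mem_univ, if_true, hw3]
      field_simp
      ring
    · -- ν₁ exchangeable
      intro σ π
      have hiff : permSetoid σ π = ⊥ ↔ π = ⊥ := by rw [permSetoid_eq_iff, permSetoid_bot]
      have h1 : (if permSetoid σ π = ⊥ then (2/3:ℝ) else 0) = (if π = ⊥ then (2/3:ℝ) else 0) := by
        simp only [hiff]
      show (if permSetoid σ π = ⊥ then (2/3:ℝ) else 0) + _ = _
      rw [h1, sum_ite_perm]
    · -- ν₂ nonneg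
      intro π
      exact Finset.sum_nonneg fun S _ => by split_ifs <;> simp [hw2pos]
    · -- ν₂ sums to 1
      rw [sum_sum_ite P2 sos w2, hP2, card_powersetCard_univ, hw2]
      field_simp
    · -- ν₂ exchangeable
      intro σ π
      exact sum_ite_perm σ π w2
    · -- ν₁ ≠ ν₂
      intro h
      have := congrFun h ⊥
      have hz3 : ∑ S ∈ P3, (if (⊥ : Setoid (Fin n)) = sos S then w3 else 0) = 0 := by
        refine Finset.sum_eq_zero fun S hS => ?_
        rw [if_neg]
        intro hEq
        refine sos_ne_bot S ?_ hEq.symm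
        rw [hP3, Finset.mem_powersetCard] at hS
        omega
      have hz2 : ∑ S ∈ P2, (if (⊥ : Setoid (Fin n)) = sos S then w2 else 0) = 0 := by
        refine Finset.sum_eq_zero fun S hS => ?_
        rw [if_neg]
        intro hEq
        refine sos_ne_bot S ?_ hEq.symm
        rw [hP2, Finset.mem_powersetCard] at hS
        omega
      rw [hz2] at this
      simp only [if_pos rfl, hz3, add_zero] at this
      norm_num at this
    · -- Phi equal
      funext x
      obtain ⟨d, rfl⟩ : ∃ d, n = d + 3 := ⟨n - 3, by omega⟩
      set k := (Finset.univ.filter fun i : Fin (d+3) => x i = true).card with hk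
      set m := (Finset.univ.filter fun i : Fin (d+3) => x i = false).card with hm
      have hkm : k + m = d + 3 := by
        rw [hk, hm]
        have : (Finset.univ.filter fun i : Fin (d+3) => x i = false)
            = (Finset.univ.filter fun i : Fin (d+3) => ¬ (x i = true)) := by
          ext i; simp
        rw [this, Finset.card_filter_add_card_filter_not]
        simp
      -- compute Phi ν₁ x
      have e1 : Phi (d+3) (1/2) (fun π => (if π = ⊥ then 2/3 else 0)
            + ∑ S ∈ P3, (if π = sos S then w3 else 0)) x
          = (2/3) * (1/2)^(d+3)
            + w3 * (1/2)^d * ((1/2) * ((k.choose 3 : ℝ) + (m.choose 3 : ℝ))) := by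
        rw [Phi]
        simp only [add_mul]
        rw [Finset.sum_add_distrib, single_ite_mul, sum_ite_mul_swap, partW_bot]
        congr 1
        have : ∀ S ∈ P3, w3 * partW (d+3) (1/2) (sos S) x
            = (w3 * (1/2)^d) * blockW (d+3) (1/2) x ↑S := by
          intro S hS
          rw [hP3, Finset.mem_powersetCard] at hS
          rw [partW_sos S (Finset.card_pos.mp (by omega)) x, hS.2]
          have : d + 3 - 3 = d := by omega
          rw [this]
          ring
        rw [Finset.sum_congr rfl this, ← Finset.mul_sum, sum_blockW 3 (by omega) x, ← hk, ← hm]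
      have e2 : Phi (d+3) (1/2) (fun π => ∑ S ∈ P2, (if π = sos S then w2 else 0)) x
          = w2 * ((1/2)^d * (1/2)) * ((1/2) * ((k.choose 2 : ℝ) + (m.choose 2 : ℝ))) := by
        rw [Phi]
        rw [sum_ite_mul_swap]
        have : ∀ S ∈ P2, w2 * partW (d+3) (1/2) (sos S) x
            = (w2 * ((1/2)^d * (1/2))) * blockW (d+3) (1/2) x ↑S := by
          intro S hS
          rw [hP2, Finset.mem_powersetCard] at hS
          rw [partW_sos S (Finset.card_pos.mp (by omega)) x, hS.2]
          have : d + 3 - 2 = d + 1 := by omega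
          rw [this, pow_succ]
          ring
        rw [Finset.sum_congr rfl this, ← Finset.mul_sum, sum_blockW 2 (by omega) x, ← hk, ← hm]
      rw [e1, e2]
      -- now a numerical identity
      rw [hw3, hw2]
      have hkc3 := cast_choose_three k
      have hmc3 := cast_choose_three m
      have hkc2 := Nat.cast_choose_two (K := ℝ) k
      have hmc2 := Nat.cast_choose_two (K := ℝ) m
      have hnc3 := cast_choose_three (d+3)
      have hnc2 := Nat.cast_choose_two (K := ℝ) (d+3)
      have hN : ((d:ℝ) + 3) = (k:ℝ) + (m:ℝ) := by
        have := congrArg (fun t : ℕ => (t:ℝ)) hkm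
        push_cast at this ⊢
        linarith
      rw [hkc3, hmc3, hkc2, hmc2]
      rw [show ((d+3 : ℕ).choose 3 : ℝ) = ((d:ℝ)+3) * ((d:ℝ)+3-1) * ((d:ℝ)+3-2) / 6 by
        rw [hnc3]; push_cast; ring]
      rw [show ((d+3 : ℕ).choose 2 : ℝ) = ((d:ℝ)+3) * ((d:ℝ)+3-1) / 2 by
        rw [hnc2]; push_cast; ring]
      have hpow : (0:ℝ) < (1/2:ℝ)^d := by positivity
      have hd0 : (0:ℝ) < (d:ℝ) + 3 := by positivity
      have hd1 : (0:ℝ) < (d:ℝ) + 3 - 1 := by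
        have : (0:ℝ) ≤ (d:ℝ) := Nat.cast_nonneg d
        linarith
      have hd2 : (0:ℝ) < (d:ℝ) + 3 - 2 := by
        have : (0:ℝ) ≤ (d:ℝ) := Nat.cast_nonneg d
        linarith
      have hK : (m:ℝ) = (d:ℝ) + 3 - (k:ℝ) := by linarith
      rw [hK]
      field_simp
      ring
  done
end

section
/- Let n ≥ 1 and ν₁, ν₂ ∈ RER_[n]. Each of the following conditions implies that Φ_p(ν₁) ≠ Φ_p(ν₂) for some p ∈ [0,1]: (i) there is a subset S ⊆ {1,…,n} such that the distribution of the number of blocks of the induced partition π_S is different under ν₁ and ν₂; (ii) there is an integer T ≥ 1 such that the expected number of blocks of size exactly T is different under ν₁ and ν₂; (iii) there is a subset C ⊆ {1,…,n} such that the probability that C is a block of π is different under ν₁ and ν₂. -/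
open scoped Classical BigOperators

/-- The blocks of the partition of `S` induced by `π`. -/
def inducedClasses {n : ℕ} (π : Setoid (Fin n)) (S : Set (Fin n)) : Set (Set (Fin n)) :=
  {B | ∃ v ∈ S, B = {w | w ∈ S ∧ π.r v w}}

/-- The `ν`-probability of the event `P`. -/
noncomputable def prOf {n : ℕ} (ν : Setoid (Fin n) → ℝ) (P : Setoid (Fin n) → Prop) : ℝ :=
  ∑ π : Setoid (Fin n), if P π then ν π else 0

namespace ST

variable {n : ℕ}

/-- classes as a Finset -/
noncomputable def clF (π : Setoid (Fin n)) : Finset (Set (Fin n)) :=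
  (Set.toFinite π.classes).toFinset

lemma mem_clF {π : Setoid (Fin n)} {B : Set (Fin n)} : B ∈ clF π ↔ B ∈ π.classes :=
  Set.Finite.mem_toFinset _

lemma class_nonempty {π : Setoid (Fin n)} {B : Set (Fin n)} (hB : B ∈ π.classes) :
    B.Nonempty := by
  obtain ⟨y, rfl⟩ := hB
  exact ⟨y, π.refl' y⟩

/-- x is constant on classes -/
def mono (π : Setoid (Fin n)) (x : Fin n → Bool) : Prop :=
  ∀ a b, π.r a b → x a = x b

lemma mono_const {π : Setoid (Fin n)} {x : Fin n → Bool} (hm : mono π x)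
    {B : Set (Fin n)} (hB : B ∈ π.classes) {a : Fin n} (ha : a ∈ B) :
    ∀ z ∈ B, x z = x a := by
  obtain ⟨y, rfl⟩ := hB
  intro z hz
  exact (hm z a (π.trans' hz (π.symm' ha)))

lemma partW_eq_prod (p : ℝ) (π : Setoid (Fin n)) (x : Fin n → Bool) :
    partW n p π x = ∏ B ∈ clF π, blockW n p x B := by
  rw [partW, ← (Set.toFinite π.classes).coe_toFinset, finprod_mem_coe_finset]
  rfl

noncomputable def m1 (π : Setoid (Fin n)) (x : Fin n → Bool) : ℕ :=
  ((clF π).filter (fun B => ∀ i ∈ B, x i = true)).card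

noncomputable def m0 (π : Setoid (Fin n)) (x : Fin n → Bool) : ℕ :=
  ((clF π).filter (fun B => ¬ ∀ i ∈ B, x i = true)).card

noncomputable def PW (π : Setoid (Fin n)) (x : Fin n → Bool) : Polynomial ℝ :=
  if mono π x then Polynomial.X ^ (m1 π x) * (1 - Polynomial.X) ^ (m0 π x) else 0

lemma partW_eq_zero_of_not_mono {π : Setoid (Fin n)} {x : Fin n → Bool}
    (h : ¬ mono π x) (p : ℝ) : partW n p π x = 0 := by
  rw [partW_eq_prod]
  simp only [mono, not_forall] at h
  obtain ⟨a, b, hab, hxab⟩ := h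
  refine Finset.prod_eq_zero (i := {z | π.r z b}) (mem_clF.2 (π.mem_classes b)) ?_
  have ha : a ∈ {z | π.r z b} := hab
  have hb : b ∈ {z | π.r z b} := π.refl' b
  rw [blockW]
  have h1 : ¬ ∀ i ∈ {z | π.r z b}, x i = true := by
    intro hall
    exact hxab ((hall a ha).trans (hall b hb).symm)
  have h2 : ¬ ∀ i ∈ {z | π.r z b}, x i = false := by
    intro hall
    exact hxab ((hall a ha).trans (hall b hb).symm)
  rw [if_neg h1, if_neg h2, add_zero]

lemma PW_eval (π : Setoid (Fin n)) (x : Fin n → Bool) (p : ℝ) :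
    (PW π x).eval p = partW n p π x := by
  by_cases hm : mono π x
  · rw [PW, if_pos hm, partW_eq_prod]
    rw [← Finset.prod_filter_mul_prod_filter_not (clF π) (fun B => ∀ i ∈ B, x i = true)]
    have h1 : ∀ B ∈ (clF π).filter (fun B => ∀ i ∈ B, x i = true),
        blockW n p x B = p := by
      intro B hB
      rw [Finset.mem_filter] at hB
      obtain ⟨hBcl, hBT⟩ := hB
      obtain ⟨a, ha⟩ := class_nonempty (mem_clF.1 hBcl)
      have h2 : ¬ ∀ i ∈ B, x i = false := by
        intro hall
        have := (hBT a ha).symm.trans (hall a ha)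
        simp at this
      rw [blockW, if_pos hBT, if_neg h2, add_zero]
    have h2 : ∀ B ∈ (clF π).filter (fun B => ¬ ∀ i ∈ B, x i = true),
        blockW n p x B = 1 - p := by
      intro B hB
      rw [Finset.mem_filter] at hB
      obtain ⟨hBcl, hBT⟩ := hB
      obtain ⟨a, ha⟩ := class_nonempty (mem_clF.1 hBcl)
      have hxa : x a = false := by
        cases hxa : x a
        · rfl
        · exact absurd (fun i hi => (mono_const hm (mem_clF.1 hBcl) ha i hi).trans hxa) hBT
      have hF : ∀ i ∈ B, x i = false :=
        fun i hi => (mono_const hm (mem_clF.1 hBcl) ha i hi).trans hxa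
      have hT : ¬ ∀ i ∈ B, x i = true := hBT
      rw [blockW, if_neg hT, if_pos hF, zero_add]
    rw [Finset.prod_congr rfl h1, Finset.prod_congr rfl h2,
      Finset.prod_const, Finset.prod_const]
    simp [m1, m0]
  · rw [PW, if_neg hm, partW_eq_zero_of_not_mono hm, Polynomial.eval_zero]

noncomputable def PhiPoly (ν : Setoid (Fin n) → ℝ) (x : Fin n → Bool) : Polynomial ℝ :=
  ∑ π : Setoid (Fin n), Polynomial.C (ν π) * PW π x

lemma PhiPoly_eval (ν : Setoid (Fin n) → ℝ) (x : Fin n → Bool) (p : ℝ) :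
    (PhiPoly ν x).eval p = Phi n p ν x := by
  rw [PhiPoly, Polynomial.eval_finset_sum, Phi]
  refine Finset.sum_congr rfl fun π _ => ?_
  rw [Polynomial.eval_mul, Polynomial.eval_C, PW_eval]

lemma poly_eq_of_eval_Icc {P Q : Polynomial ℝ}
    (h : ∀ p : ℝ, 0 ≤ p → p ≤ 1 → P.eval p = Q.eval p) : P = Q := by
  have h0 : P - Q = 0 := by
    apply Polynomial.eq_zero_of_infinite_isRoot
    apply Set.Infinite.mono (s := Set.Icc (0:ℝ) 1)
    · intro p hp
      simp only [Set.mem_setOf_eq, Polynomial.IsRoot, Polynomial.eval_sub]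
      rw [h p hp.1 hp.2, sub_self]
    · exact Set.Icc_infinite zero_lt_one
  linear_combination (norm := ring_nf) h0

/-- the indicator coloring of C -/
noncomputable def indC (C : Set (Fin n)) : Fin n → Bool := fun i => decide (i ∈ C)

lemma coeff_one_PW {π : Setoid (Fin n)} {C : Set (Fin n)} (hC : C.Nonempty) :
    (PW π (indC C)).coeff 1 = if C ∈ π.classes then 1 else 0 := by
  have hx : ∀ i, indC C i = true ↔ i ∈ C := by intro i; simp [indC]
  by_cases hm : mono π (indC C)
  · -- monochromatic case: m1 ≥ 1
    have hm1pos : ∃ B, B ∈ (clF π).filter (fun B => ∀ i ∈ B, indC C i = true) := by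
      obtain ⟨c, hc⟩ := hC
      refine ⟨{z | π.r z c}, Finset.mem_filter.2 ⟨mem_clF.2 (π.mem_classes c), ?_⟩⟩
      intro i hi
      rw [hm i c hi, hx]; exact hc
    by_cases hCcl : C ∈ π.classes
    · -- m1 = 1
      have hfil : (clF π).filter (fun B => ∀ i ∈ B, indC C i = true) = {C} := by
        apply Finset.eq_singleton_iff_unique_mem.2
        constructor
        · exact Finset.mem_filter.2 ⟨mem_clF.2 hCcl, fun i hi => (hx i).2 hi⟩
        · intro B hB
          rw [Finset.mem_filter] at hB
          obtain ⟨a, ha⟩ := class_nonempty (mem_clF.1 hB.1)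
          have haC : a ∈ C := (hx a).1 (hB.2 a ha)
          exact Setoid.eq_of_mem_classes (mem_clF.1 hB.1) ha hCcl haC
      have hm1 : m1 π (indC C) = 1 := by rw [m1, hfil, Finset.card_singleton]
      rw [PW, if_pos hm, hm1, pow_one, Polynomial.coeff_X_mul,
        Polynomial.coeff_zero_eq_eval_zero, if_pos hCcl]
      simp
    · -- m1 ≥ 2
      have hm1ne : m1 π (indC C) ≠ 1 := by
        intro h1
        obtain ⟨B, hB⟩ := Finset.card_eq_one.1 h1
        have hBmem : B ∈ (clF π).filter (fun B => ∀ i ∈ B, indC C i = true) := by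
          rw [hB]; exact Finset.mem_singleton_self B
        rw [Finset.mem_filter] at hBmem
        have hBC : B ⊆ C := fun i hi => (hx i).1 (hBmem.2 i hi)
        have hCB : C ⊆ B := by
          intro c hc
          have hmem : {z | π.r z c} ∈ (clF π).filter (fun B => ∀ i ∈ B, indC C i = true) := by
            refine Finset.mem_filter.2 ⟨mem_clF.2 (π.mem_classes c), ?_⟩
            intro i hi; rw [hm i c hi, hx]; exact hc
          rw [hB, Finset.mem_singleton] at hmem
          rw [← hmem]; exact π.refl' c
        have : C = B := le_antisymm hCB hBC
        exact hCcl (this ▸ mem_clF.1 hBmem.1)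
      have hm1ge : 2 ≤ m1 π (indC C) := by
        have h1 : 0 < m1 π (indC C) := by
          rw [m1]; exact Finset.card_pos.2 hm1pos
        omega
      rw [PW, if_pos hm, mul_comm, Polynomial.coeff_mul_X_pow',
        if_neg (by omega), if_neg hCcl]
  · -- not mono: C can't be a class
    have hCcl : C ∉ π.classes := by
      intro hCcl
      apply hm
      intro a b hab
      by_cases haC : a ∈ C
      · have hbB : a ∈ {z | π.r z b} := hab
        have : C = {z | π.r z b} :=
          Setoid.eq_of_mem_classes hCcl haC (π.mem_classes b) hbB
        have hbC : b ∈ C := this ▸ (π.refl' b : b ∈ {z | π.r z b})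
        simp [indC, haC, hbC]
      · have hbC : b ∉ C := by
          intro hbC
          have haB : b ∈ {z | π.r z a} := π.symm' hab
          have : C = {z | π.r z a} :=
            Setoid.eq_of_mem_classes hCcl hbC (π.mem_classes a) haB
          exact haC (this ▸ (π.refl' a : a ∈ {z | π.r z a}))
        simp [indC, haC, hbC]
    rw [PW, if_neg hm, Polynomial.coeff_zero, if_neg hCcl]

lemma coeff_one_PhiPoly (ν : Setoid (Fin n) → ℝ) {C : Set (Fin n)} (hC : C.Nonempty) :
    (PhiPoly ν (indC C)).coeff 1 = prOf ν (fun π => C ∈ π.classes) := by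
  rw [PhiPoly, Polynomial.finset_sum_coeff, prOf]
  refine Finset.sum_congr rfl fun π _ => ?_
  rw [Polynomial.coeff_C_mul, coeff_one_PW hC, mul_ite, mul_one, mul_zero]

section KeyLemma

variable (π : Setoid (Fin n)) (S : Set (Fin n))

lemma mkeq {π : Setoid (Fin n)} (a b : Fin n) :
    Quotient.mk π a = Quotient.mk π b ↔ π.r a b := Quotient.eq

/-- the image of S in the quotient, as a Finset -/
noncomputable def MS : Finset (Quotient π) :=
  Finset.univ.filter (fun q => ∃ i ∈ S, Quotient.mk π i = q)

lemma mem_MS {q : Quotient π} : q ∈ MS π S ↔ ∃ i ∈ S, Quotient.mk π i = q := by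
  rw [MS, Finset.mem_filter]
  exact ⟨fun h => h.2, fun h => ⟨Finset.mem_univ q, h⟩⟩

lemma trace_eq (v : Fin n) (hv : v ∈ S) :
    {w | w ∈ S ∧ Quotient.mk π w = Quotient.mk π v} = {w | w ∈ S ∧ π.r v w} := by
  ext w
  simp only [Set.mem_setOf_eq]
  constructor
  · rintro ⟨hw, hrel⟩
    exact ⟨hw, π.symm' ((mkeq w v).1 hrel)⟩
  · rintro ⟨hw, hrel⟩
    exact ⟨hw, (mkeq w v).2 (π.symm' hrel)⟩

lemma ncard_induced_eq_card_MS : (inducedClasses π S).ncard = (MS π S).card := by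
  have himg : inducedClasses π S =
      (fun q : Quotient π => {w | w ∈ S ∧ Quotient.mk π w = q}) '' (MS π S : Set (Quotient π)) := by
    ext B
    constructor
    · rintro ⟨v, hv, rfl⟩
      exact ⟨Quotient.mk π v, (mem_MS π S).2 ⟨v, hv, rfl⟩, trace_eq π S v hv⟩
    · rintro ⟨q, hq, rfl⟩
      obtain ⟨v, hv, rfl⟩ := (mem_MS π S).1 hq
      exact ⟨v, hv, trace_eq π S v hv⟩
  have hinj : Set.InjOn (fun q : Quotient π => {w | w ∈ S ∧ Quotient.mk π w = q})
      (MS π S : Set (Quotient π)) := by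
    intro q hq q' _ heq
    obtain ⟨v, hv, rfl⟩ := (mem_MS π S).1 hq
    have hvmem : v ∈ {w | w ∈ S ∧ Quotient.mk π w = Quotient.mk π v} := ⟨hv, rfl⟩
    rw [show {w | w ∈ S ∧ Quotient.mk π w = Quotient.mk π v} =
        {w | w ∈ S ∧ Quotient.mk π w = q'} from heq] at hvmem
    exact hvmem.2
  rw [himg, Set.ncard_image_of_injOn hinj, Set.ncard_coe_finset]

/-- the partW of a quotient-factored coloring -/
lemma partW_factored (p : ℝ) (y : Quotient π → Bool) :
    partW n p π (fun i => y (Quotient.mk π i)) = ∏ q : Quotient π, (if y q then p else 1 - p) := by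
  rw [partW_eq_prod]
  rw [← Finset.prod_bij (s := (Finset.univ : Finset (Quotient π))) (t := clF π)
    (i := fun q _ => {z | Quotient.mk π z = q})
    (f := fun q => if y q then p else 1 - p)
    (g := fun B => blockW n p (fun i => y (Quotient.mk π i)) B)]
  · intro q _
    obtain ⟨v, rfl⟩ := Quotient.exists_rep q
    have : {z | Quotient.mk π z = Quotient.mk π v} = {z | π.r z v} := by
      ext z; exact mkeq z v
    rw [mem_clF, this]
    exact π.mem_classes v
  · intro q _ q' _ heq
    obtain ⟨v, rfl⟩ := Quotient.exists_rep q
    have hmem : v ∈ {z | Quotient.mk π z = Quotient.mk π v} := rfl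
    rw [show {z | Quotient.mk π z = Quotient.mk π v} = {z | Quotient.mk π z = q'} from heq]
      at hmem
    exact hmem
  · intro B hB
    obtain ⟨v, rfl⟩ := mem_clF.1 hB
    refine ⟨Quotient.mk π v, Finset.mem_univ _, ?_⟩
    ext z
    simp only [Set.mem_setOf_eq]
    exact mkeq z v
  · intro q _
    obtain ⟨v, rfl⟩ := Quotient.exists_rep q
    have hmem : ∀ z ∈ {z : Fin n | Quotient.mk π z = Quotient.mk π v},
        y (Quotient.mk π z) = y (Quotient.mk π v) := by
      intro z hz; rw [show Quotient.mk π z = Quotient.mk π v from hz]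
    have hv : v ∈ {z : Fin n | Quotient.mk π z = Quotient.mk π v} := rfl
    cases hy : y (Quotient.mk π v)
    · have h1 : ¬ ∀ i ∈ {z : Fin n | Quotient.mk π z = Quotient.mk π v},
          (fun i => y (Quotient.mk π i)) i = true := by
        intro hall
        have := hall v hv
        simp only at this
        rw [hy] at this; simp at this
      have h2 : ∀ i ∈ {z : Fin n | Quotient.mk π z = Quotient.mk π v},
          (fun i => y (Quotient.mk π i)) i = false := by
        intro i hi
        simp only
        rw [hmem i hi, hy]
      rw [blockW, if_neg h1, if_pos h2, zero_add, if_neg (by simp [hy])]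
    · have h1 : ∀ i ∈ {z : Fin n | Quotient.mk π z = Quotient.mk π v},
          (fun i => y (Quotient.mk π i)) i = true := by
        intro i hi
        simp only
        rw [hmem i hi, hy]
      have h2 : ¬ ∀ i ∈ {z : Fin n | Quotient.mk π z = Quotient.mk π v},
          (fun i => y (Quotient.mk π i)) i = false := by
        intro hall
        have := hall v hv
        simp only at this
        rw [hy] at this; simp at this
      rw [blockW, if_pos h1, if_neg h2, add_zero, if_pos (by simp [hy])]

end KeyLemma

section SumLemma

variable (π : Setoid (Fin n)) (S : Set (Fin n))

noncomputable def ESF (S : Set (Fin n)) : Finset (Fin n → Bool) :=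
  Finset.univ.filter (fun x => ∀ i ∈ S, x i = true)

lemma sum_partW (p : ℝ) :
    ∑ x ∈ ESF S, partW n p π x = p ^ ((inducedClasses π S).ncard) := by
  classical
  -- F2: the weight function on the quotient
  set F2 : Quotient π → Bool → ℝ :=
    fun q b => if q ∈ MS π S then (if b then p else 0) else (if b then p else 1 - p) with hF2
  have step1 : ∑ x ∈ ESF S, partW n p π x =
      ∑ x ∈ Finset.univ.filter (fun x : Fin n → Bool => mono π x),
        (if (∀ i ∈ S, x i = true) then partW n p π x else 0) := by
    rw [ESF, Finset.sum_filter]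
    symm
    apply Finset.sum_subset (Finset.filter_subset _ _)
    intro x _ hx
    rw [Finset.mem_filter] at hx
    have : ¬ mono π x := fun hm => hx ⟨Finset.mem_univ x, hm⟩
    rw [partW_eq_zero_of_not_mono this, ite_self]
  have step2 : ∑ x ∈ Finset.univ.filter (fun x : Fin n → Bool => mono π x),
        (if (∀ i ∈ S, x i = true) then partW n p π x else 0) =
      ∑ y : Quotient π → Bool, ∏ q : Quotient π, F2 q (y q) := by
    rw [← Finset.sum_bij (s := (Finset.univ : Finset (Quotient π → Bool)))
      (t := Finset.univ.filter (fun x : Fin n → Bool => mono π x))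
      (i := fun y _ => fun i => y (Quotient.mk π i))
      (f := fun y => ∏ q : Quotient π, F2 q (y q))
      (g := fun x => if (∀ i ∈ S, x i = true) then partW n p π x else 0)]
    · intro y _
      refine Finset.mem_filter.2 ⟨Finset.mem_univ _, ?_⟩
      intro a b hab
      simp only
      rw [(mkeq a b).2 hab]
    · intro y _ y' _ heq
      funext q
      obtain ⟨v, rfl⟩ := Quotient.exists_rep q
      exact congrFun heq v
    · intro x hx
      have hm : mono π x := (Finset.mem_filter.1 hx).2
      refine ⟨Quotient.lift x (fun a b hab => hm a b hab), Finset.mem_univ _, ?_⟩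
      funext i
      rfl
    · intro y _
      by_cases hcon : ∀ q ∈ MS π S, y q = true
      · have hcond : ∀ i ∈ S, y (Quotient.mk π i) = true := by
          intro i hi
          exact hcon _ ((mem_MS π S).2 ⟨i, hi, rfl⟩)
        rw [if_pos hcond, partW_factored]
        refine Finset.prod_congr rfl fun q _ => ?_
        by_cases hq : q ∈ MS π S
        · simp [hF2, hq, hcon q hq]
        · simp [hF2, hq]
      · push_neg at hcon
        obtain ⟨q0, hq0, hyq0⟩ := hcon
        have hy0 : y q0 = false := by
          cases h : y q0
          · rfl
          · exact absurd h hyq0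
        have hcond : ¬ ∀ i ∈ S, y (Quotient.mk π i) = true := by
          intro hall
          obtain ⟨i, hi, rfl⟩ := (mem_MS π S).1 hq0
          exact hyq0 (hall i hi)
        rw [if_neg hcond]
        refine Finset.prod_eq_zero (Finset.mem_univ q0) ?_
        rw [hF2]
        simp only [if_pos hq0, hy0]
        simp
  have step3 : ∑ y : Quotient π → Bool, ∏ q : Quotient π, F2 q (y q) =
      ∏ q : Quotient π, (F2 q true + F2 q false) := by
    calc ∑ y : Quotient π → Bool, ∏ q : Quotient π, F2 q (y q)
        = ∑ y ∈ Fintype.piFinset (fun _ : Quotient π => (Finset.univ : Finset Bool)),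
            ∏ q : Quotient π, F2 q (y q) := by rw [Fintype.piFinset_univ]
      _ = ∏ q : Quotient π, ∑ b : Bool, F2 q b := (Finset.prod_univ_sum _ _).symm
      _ = ∏ q : Quotient π, (F2 q true + F2 q false) :=
          Finset.prod_congr rfl fun q _ => by rw [Fintype.sum_bool]
  have step4 : ∏ q : Quotient π, (F2 q true + F2 q false) = p ^ (MS π S).card := by
    have hval : ∀ q : Quotient π, F2 q true + F2 q false = if q ∈ MS π S then p else 1 := by
      intro q
      by_cases hq : q ∈ MS π S
      · simp [hF2, hq]
      · simp [hF2, hq]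
    rw [Finset.prod_congr rfl fun q _ => hval q]
    rw [Finset.prod_ite_mem Finset.univ (MS π S) (fun _ => p), Finset.univ_inter,
      Finset.prod_const]
  rw [step1, step2, step3, step4, ncard_induced_eq_card_MS]
end SumLemma

section Main

variable {ν₁ ν₂ : Setoid (Fin n) → ℝ}

lemma eq_prOf_block (H : ∀ p : ℝ, 0 ≤ p → p ≤ 1 → Phi n p ν₁ = Phi n p ν₂)
    (C : Set (Fin n)) :
    prOf ν₁ (fun π => C ∈ π.classes) = prOf ν₂ (fun π => C ∈ π.classes) := by
  rcases C.eq_empty_or_nonempty with rfl | hC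
  · rw [prOf, prOf]
    refine Finset.sum_congr rfl fun π _ => ?_
    rw [if_neg Setoid.empty_notMem_classes, if_neg Setoid.empty_notMem_classes]
  · have hpoly : PhiPoly ν₁ (indC C) = PhiPoly ν₂ (indC C) :=
      poly_eq_of_eval_Icc (fun p h0 h1 => by
        rw [PhiPoly_eval, PhiPoly_eval, H p h0 h1])
    rw [← coeff_one_PhiPoly ν₁ hC, ← coeff_one_PhiPoly ν₂ hC, hpoly]

lemma eq_prOf_induced (H : ∀ p : ℝ, 0 ≤ p → p ≤ 1 → Phi n p ν₁ = Phi n p ν₂)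
    (S : Set (Fin n)) (k : ℕ) :
    prOf ν₁ (fun π => (inducedClasses π S).ncard = k) =
    prOf ν₂ (fun π => (inducedClasses π S).ncard = k) := by
  classical
  set PolyS : (Setoid (Fin n) → ℝ) → Polynomial ℝ :=
    fun ν => ∑ π : Setoid (Fin n), Polynomial.C (ν π) *
      Polynomial.X ^ ((inducedClasses π S).ncard) with hPolyS
  have heval : ∀ ν (p : ℝ), (PolyS ν).eval p = ∑ x ∈ ESF S, Phi n p ν x := by
    intro ν p
    rw [hPolyS]
    simp only [Polynomial.eval_finset_sum, Polynomial.eval_mul, Polynomial.eval_C,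
      Polynomial.eval_pow, Polynomial.eval_X]
    calc ∑ π : Setoid (Fin n), ν π * p ^ ((inducedClasses π S).ncard)
        = ∑ π : Setoid (Fin n), ∑ x ∈ ESF S, ν π * partW n p π x := by
          refine Finset.sum_congr rfl fun π _ => ?_
          rw [← Finset.mul_sum, sum_partW]
      _ = ∑ x ∈ ESF S, ∑ π : Setoid (Fin n), ν π * partW n p π x := Finset.sum_comm
      _ = ∑ x ∈ ESF S, Phi n p ν x := rfl
  have hpoly : PolyS ν₁ = PolyS ν₂ := by
    apply poly_eq_of_eval_Icc
    intro p h0 h1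
    rw [heval, heval]
    refine Finset.sum_congr rfl fun x _ => ?_
    rw [H p h0 h1]
  have hcoeff : ∀ ν, (PolyS ν).coeff k =
      prOf ν (fun π => (inducedClasses π S).ncard = k) := by
    intro ν
    rw [hPolyS, Polynomial.finset_sum_coeff, prOf]
    refine Finset.sum_congr rfl fun π _ => ?_
    rw [Polynomial.coeff_C_mul, Polynomial.coeff_X_pow, mul_ite, mul_one, mul_zero]
    simp only [eq_comm]
  rw [← hcoeff ν₁, ← hcoeff ν₂, hpoly]

lemma eq_expected_count (H : ∀ p : ℝ, 0 ≤ p → p ≤ 1 → Phi n p ν₁ = Phi n p ν₂)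
    (T : ℕ) :
    (∑ π : Setoid (Fin n), ν₁ π * ({B ∈ π.classes | B.ncard = T}.ncard : ℝ)) =
    (∑ π : Setoid (Fin n), ν₂ π * ({B ∈ π.classes | B.ncard = T}.ncard : ℝ)) := by
  classical
  have hcount : ∀ π : Setoid (Fin n), ({B ∈ π.classes | B.ncard = T}.ncard : ℝ) =
      ∑ C : Set (Fin n), (if C ∈ π.classes ∧ C.ncard = T then (1:ℝ) else 0) := by
    intro π
    have hset : {B ∈ π.classes | B.ncard = T} =
        ↑(Finset.univ.filter (fun C : Set (Fin n) => C ∈ π.classes ∧ C.ncard = T)) := by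
      ext B
      simp [Set.mem_setOf_eq]
    rw [hset, Set.ncard_coe_finset, Finset.sum_boole]
  have hswap : ∀ ν : Setoid (Fin n) → ℝ,
      (∑ π : Setoid (Fin n), ν π * ({B ∈ π.classes | B.ncard = T}.ncard : ℝ)) =
      ∑ C : Set (Fin n), (if C.ncard = T then prOf ν (fun π => C ∈ π.classes) else 0) := by
    intro ν
    simp_rw [hcount, Finset.mul_sum]
    rw [Finset.sum_comm]
    refine Finset.sum_congr rfl fun C _ => ?_
    by_cases hT : C.ncard = T
    · rw [if_pos hT, prOf]
      refine Finset.sum_congr rfl fun π _ => ?_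
      by_cases hc : C ∈ π.classes
      · rw [if_pos ⟨hc, hT⟩, if_pos hc, mul_one]
      · rw [if_neg (fun h => hc h.1), if_neg hc, mul_zero]
    · rw [if_neg hT]
      refine Finset.sum_eq_zero fun π _ => ?_
      rw [if_neg (fun h => hT h.2), mul_zero]
  rw [hswap ν₁, hswap ν₂]
  refine Finset.sum_congr rfl fun C _ => ?_
  rw [eq_prOf_block H C]

end Main
end ST

/-- **Lemma (Steif–Tykesson, Lemma 2.2).**
Let `n ≥ 1` and `ν₁, ν₂ ∈ RER_[n]`.  Each of the following conditions implies that
`Φ_p(ν₁) ≠ Φ_p(ν₂)` for some `p ∈ [0,1]`: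
(i) for some `S ⊆ [n]`, the distribution of the number of blocks of the induced partition `π_S`
    differs under `ν₁` and `ν₂`;
(ii) for some `T ≥ 1`, the expected number of blocks of size exactly `T` differs under `ν₁`
    and `ν₂`;
(iii) for some `C ⊆ [n]`, the probability that `C` is a block differs under `ν₁` and `ν₂`. -/
theorem exists_p_colorProcess_ne_of_distinguishing_statistic
    (n : ℕ) (hn : 1 ≤ n) (ν₁ ν₂ : Setoid (Fin n) → ℝ)
    (h₁ : IsRER n ν₁) (h₂ : IsRER n ν₂)
    (h : (∃ (S : Set (Fin n)) (k : ℕ),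
            prOf ν₁ (fun π => (inducedClasses π S).ncard = k) ≠
            prOf ν₂ (fun π => (inducedClasses π S).ncard = k)) ∨
         (∃ T : ℕ, 1 ≤ T ∧
            (∑ π : Setoid (Fin n), ν₁ π * ({B ∈ π.classes | B.ncard = T}.ncard : ℝ)) ≠
            (∑ π : Setoid (Fin n), ν₂ π * ({B ∈ π.classes | B.ncard = T}.ncard : ℝ))) ∨
         (∃ C : Set (Fin n),
            prOf ν₁ (fun π => C ∈ π.classes) ≠ prOf ν₂ (fun π => C ∈ π.classes))) :
    ∃ p : ℝ, 0 ≤ p ∧ p ≤ 1 ∧ Phi n p ν₁ ≠ Phi n p ν₂ := by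
  by_contra hcon
  push_neg at hcon
  have H : ∀ p : ℝ, 0 ≤ p → p ≤ 1 → Phi n p ν₁ = Phi n p ν₂ :=
    fun p h0 h1 => hcon p h0 h1
  rcases h with ⟨S, k, hne⟩ | ⟨T, _, hne⟩ | ⟨C, hne⟩
  · exact hne (ST.eq_prOf_induced H S k)
  · exact hne (ST.eq_expected_count H T)
  · exact hne (ST.eq_prOf_block H C)
end

section
/- Let n ≥ 2 and p ∈ (0,1), and let Φ_p^* denote the linear extension of Φ_p to the real vector space of signed measures on Part_[n]. Then: (i) Φ_p is injective on RER_[n] if and only if Ker(Φ_p^*) = {0}; (ii) ν ∈ RER_[n] fails to be (RER_[n],p)-unique if and only if there exists a nonzero v ∈ Ker(Φ_p^*) with v({π}) ≥ 0 for every partition π outside the support of ν; (iii) if dim Ker(Φ_p^*) = 1, then there exist mutually singular ν₁ ≠ ν₂ ∈ RER_[n] with Φ_p(ν₁) = Φ_p(ν₂), and this unordered pair is unique; (iv) if dim Ker(Φ_p^*) ≥ 2, then there are infinitely many distinct unordered pairs of mutually singular ν₁, ν₂ ∈ RER_[n] with Φ_p(ν₁) = Φ_p(ν₂). -/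
open scoped Classical BigOperators

/-- The linear extension `Φ_p^*` of `Φ_p` to the vector space of signed measures
on `Part_[n]` (identified with real-valued functions on `Part_[n]`). -/
noncomputable def PhiLin (n : ℕ) (p : ℝ) :
    (Setoid (Fin n) → ℝ) →ₗ[ℝ] ((Fin n → Bool) → ℝ) where
  toFun ν := Phi n p ν
  map_add' ν ν' := by
    funext x
    simp only [Phi, Pi.add_apply, add_mul]
    rw [Finset.sum_add_distrib]
  map_smul' c ν := by
    funext x
    simp only [Phi, Pi.smul_apply, smul_eq_mul, RingHom.id_apply, mul_assoc]
    rw [← Finset.mul_sum]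


section AuxST

variable {n : ℕ} {p : ℝ}

noncomputable instance instFintypeQuotSetoid {n : ℕ} (π : Setoid (Fin n)) :
    Fintype (Quotient π) :=
  Fintype.ofSurjective (Quotient.mk π) fun q => q.exists_rep

private noncomputable def clsFin {n : ℕ} (π : Setoid (Fin n)) : Finset (Set (Fin n)) :=
  (Set.toFinite π.classes).toFinset

private lemma mem_clsFin {π : Setoid (Fin n)} {B : Set (Fin n)} :
    B ∈ clsFin π ↔ B ∈ π.classes := Set.Finite.mem_toFinset _

private lemma partW_eq_prod (π : Setoid (Fin n)) (x : Fin n → Bool) :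
    partW n p π x = ∏ B ∈ clsFin π, blockW n p x B :=
  finprod_mem_eq_finite_toFinset_prod _ _

private lemma blockW_class (π : Setoid (Fin n)) (y : Quotient π → Bool) (q : Quotient π) :
    blockW n p (fun i => y (Quotient.mk π i)) {z | Quotient.mk π z = q}
      = if y q then p else 1 - p := by
  have hmem : q.out ∈ {z | Quotient.mk π z = q} := q.out_eq
  by_cases hy : y q = true
  · have h1 : ∀ i ∈ {z | Quotient.mk π z = q}, (fun i => y (Quotient.mk π i)) i = true := by
      intro i hi
      show y (Quotient.mk π i) = true
      rw [show Quotient.mk π i = q from hi, hy]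
    have h2 : ¬ ∀ i ∈ {z | Quotient.mk π z = q}, (fun i => y (Quotient.mk π i)) i = false := by
      intro hall
      have h3 := hall q.out hmem
      simp only at h3
      rw [show Quotient.mk π q.out = q from q.out_eq, hy] at h3
      exact Bool.noConfusion h3
    rw [blockW, if_pos h1, if_neg h2, if_pos hy, add_zero]
  · have hy' : y q = false := by simpa using hy
    have h1 : ∀ i ∈ {z | Quotient.mk π z = q}, (fun i => y (Quotient.mk π i)) i = false := by
      intro i hi
      show y (Quotient.mk π i) = false
      rw [show Quotient.mk π i = q from hi, hy']
    have h2 : ¬ ∀ i ∈ {z | Quotient.mk π z = q}, (fun i => y (Quotient.mk π i)) i = true := by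
      intro hall
      have h3 := hall q.out hmem
      simp only at h3
      rw [show Quotient.mk π q.out = q from q.out_eq, hy'] at h3
      exact Bool.noConfusion h3
    rw [blockW, if_neg h2, if_pos h1, if_neg hy, zero_add]

private lemma partW_g (π : Setoid (Fin n)) (y : Quotient π → Bool) :
    partW n p π (fun i => y (Quotient.mk π i))
      = ∏ q : Quotient π, (if y q then p else 1 - p) := by
  rw [partW_eq_prod]
  refine (Finset.prod_bij (fun (q : Quotient π) _ => {z | Quotient.mk π z = q})
    ?_ ?_ ?_ ?_).symm
  · intro q _
    show {z | Quotient.mk π z = q} ∈ clsFin π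
    rw [mem_clsFin]
    have heq : {z | Quotient.mk π z = q} = {z | π.r z q.out} := by
      ext z
      constructor
      · intro h
        exact Quotient.exact (h.trans q.out_eq.symm)
      · intro h
        exact (Quotient.sound h).trans q.out_eq
    rw [heq]
    exact π.mem_classes q.out
  · intro q₁ _ q₂ _ h
    have h' : {z | Quotient.mk π z = q₁} = {z | Quotient.mk π z = q₂} := h
    have h1 : q₁.out ∈ {z | Quotient.mk π z = q₁} := q₁.out_eq
    rw [h'] at h1
    rw [← q₁.out_eq]
    exact h1
  · intro B hB
    obtain ⟨a, rfl⟩ := mem_clsFin.mp hB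
    refine ⟨Quotient.mk π a, Finset.mem_univ _, ?_⟩
    show {z | Quotient.mk π z = Quotient.mk π a} = {x | π.r x a}
    ext z
    exact ⟨fun h => Quotient.exact h, fun h => Quotient.sound h⟩
  · intro q _
    exact (blockW_class π y q).symm

private lemma partW_zero {π : Setoid (Fin n)} {x : Fin n → Bool}
    {i j : Fin n} (hr : π.r i j) (hne : x i ≠ x j) : partW n p π x = 0 := by
  rw [partW_eq_prod]
  refine Finset.prod_eq_zero (mem_clsFin.mpr (π.mem_classes j)) ?_
  have hi : i ∈ {z | π.r z j} := hr
  have hj : j ∈ {z | π.r z j} := π.refl' j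
  rw [blockW, if_neg, if_neg, add_zero]
  · intro hall
    exact hne ((hall i hi).trans (hall j hj).symm)
  · intro hall
    exact hne ((hall i hi).trans (hall j hj).symm)

private lemma sum_partW (π : Setoid (Fin n)) : ∑ x : Fin n → Bool, partW n p π x = 1 := by
  set g : (Quotient π → Bool) → (Fin n → Bool) := fun y i => y (Quotient.mk π i) with hg
  have hginj : Function.Injective g := by
    intro y y' h
    funext q
    have := congrFun h q.out
    simpa [hg, q.out_eq] using this
  have hzero : ∀ x : Fin n → Bool, x ∉ Finset.univ.image g → partW n p π x = 0 := by
    intro x hx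
    by_cases hconst : ∀ i j : Fin n, π.r i j → x i = x j
    · exact absurd (Finset.mem_image.mpr ⟨fun q => x q.out, Finset.mem_univ _, by
        funext i
        exact hconst _ _ (Quotient.exact ((Quotient.mk π i).out_eq))⟩) hx
    · push_neg at hconst
      obtain ⟨i, j, hr, hne⟩ := hconst
      exact partW_zero hr hne
  have h1 : ∑ x : Fin n → Bool, partW n p π x
      = ∑ x ∈ Finset.univ.image g, partW n p π x :=
    (Finset.sum_subset (Finset.subset_univ _) (fun x _ hx => hzero x hx)).symm
  rw [h1, Finset.sum_image (fun y _ y' _ h => hginj h)]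
  rw [Finset.sum_congr rfl (fun y _ => partW_g π y)]
  rw [← Fintype.piFinset_univ,
    ← Finset.prod_univ_sum (t := fun _ : Quotient π => (Finset.univ : Finset Bool))
      (f := fun _ b => if b then p else 1 - p)]
  have hone : ∀ q : Quotient π, (∑ b : Bool, (if b then p else 1 - p)) = 1 := by
    intro q
    rw [Fintype.sum_bool]
    norm_num
  rw [Finset.prod_congr rfl (fun q _ => hone q), Finset.prod_const_one]

private lemma PhiLin_apply (n : ℕ) (p : ℝ) (ν : Setoid (Fin n) → ℝ) :
    PhiLin n p ν = Phi n p ν := rfl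

private lemma sum_eq_zero_of_ker {v : Setoid (Fin n) → ℝ} (hv : PhiLin n p v = 0) :
    ∑ π : Setoid (Fin n), v π = 0 := by
  have key : ∑ π : Setoid (Fin n), v π = ∑ x : Fin n → Bool, Phi n p v x := by
    unfold Phi
    rw [Finset.sum_comm]
    refine Finset.sum_congr rfl fun π _ => ?_
    rw [← Finset.mul_sum, sum_partW, mul_one]
  have h0 : Phi n p v = 0 := hv
  rw [key, h0]
  simp

private def posP (v : Setoid (Fin n) → ℝ) : Setoid (Fin n) → ℝ := fun π => max (v π) 0

private def negP (v : Setoid (Fin n) → ℝ) : Setoid (Fin n) → ℝ := fun π => max (-v π) 0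

private lemma posP_sub_negP (v : Setoid (Fin n) → ℝ) : posP v - negP v = v := by
  funext π
  simp only [posP, negP, Pi.sub_apply]
  rcases le_total (v π) 0 with h | h
  · rw [max_eq_right h, max_eq_left (by linarith)]
    ring
  · rw [max_eq_left h, max_eq_right (by linarith)]
    ring

private lemma posP_smul {r : ℝ} (hr : 0 ≤ r) (v : Setoid (Fin n) → ℝ) :
    posP (r • v) = r • posP v := by
  funext π
  simp only [posP, Pi.smul_apply, smul_eq_mul]
  rcases le_total (v π) 0 with h | h
  · rw [max_eq_right h, max_eq_right (mul_nonpos_of_nonneg_of_nonpos hr h), mul_zero]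
  · rw [max_eq_left h, max_eq_left (mul_nonneg hr h)]

private lemma negP_smul {r : ℝ} (hr : 0 ≤ r) (v : Setoid (Fin n) → ℝ) :
    negP (r • v) = r • negP v := by
  funext π
  simp only [negP, Pi.smul_apply, smul_eq_mul]
  rcases le_total (v π) 0 with h | h
  · rw [max_eq_left (by nlinarith : (0:ℝ) ≤ -(r * v π)), max_eq_left (by linarith : (0:ℝ) ≤ -v π)]
    ring
  · rw [max_eq_right (by nlinarith : -(r * v π) ≤ (0:ℝ)), max_eq_right (by linarith : -v π ≤ (0:ℝ)), mul_zero]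

private lemma posP_smul_neg {r : ℝ} (hr : r ≤ 0) (v : Setoid (Fin n) → ℝ) :
    posP (r • v) = (-r) • negP v := by
  funext π
  simp only [posP, negP, Pi.smul_apply, smul_eq_mul]
  rcases le_total (v π) 0 with h | h
  · rw [max_eq_left (by nlinarith), max_eq_left (by linarith)]
    ring
  · rw [max_eq_right (by nlinarith), max_eq_right (by linarith), mul_zero]

private lemma negP_smul_neg {r : ℝ} (hr : r ≤ 0) (v : Setoid (Fin n) → ℝ) :
    negP (r • v) = (-r) • posP v := by
  funext π
  simp only [posP, negP, Pi.smul_apply, smul_eq_mul]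
  rcases le_total (v π) 0 with h | h
  · rw [max_eq_right (by nlinarith), max_eq_right h, mul_zero]
  · rw [max_eq_left (by nlinarith), max_eq_left h]
    ring

private lemma pair_decomp {ν₁ ν₂ : Setoid (Fin n) → ℝ}
    (h₁ : ∀ π, 0 ≤ ν₁ π) (h₂ : ∀ π, 0 ≤ ν₂ π)
    (hdisj : ∀ π, ν₁ π = 0 ∨ ν₂ π = 0) :
    posP (ν₁ - ν₂) = ν₁ ∧ negP (ν₁ - ν₂) = ν₂ := by
  constructor
  · funext π
    simp only [posP, Pi.sub_apply]
    rcases hdisj π with h | h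
    · rw [h, zero_sub, max_eq_right (by linarith [h₂ π])]
    · rw [h, sub_zero, max_eq_left (h₁ π)]
  · funext π
    simp only [negP, Pi.sub_apply, neg_sub]
    rcases hdisj π with h | h
    · rw [h, sub_zero, max_eq_left (h₂ π)]
    · rw [h, zero_sub, max_eq_right (by linarith [h₁ π])]

private lemma mk_pair {v : Setoid (Fin n) → ℝ} (hker : PhiLin n p v = 0) (hv : v ≠ 0) :
    ∃ (c : ℝ) (ν₁ ν₂ : Setoid (Fin n) → ℝ), 0 < c ∧ IsRER n ν₁ ∧ IsRER n ν₂ ∧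
      ν₁ ≠ ν₂ ∧ (∀ π, ν₁ π = 0 ∨ ν₂ π = 0) ∧ Phi n p ν₁ = Phi n p ν₂ ∧
      v = c • (ν₁ - ν₂) := by
  have hsum : ∑ π : Setoid (Fin n), v π = 0 := sum_eq_zero_of_ker hker
  have hps : ∀ π, posP v π - negP v π = v π := fun π => congrFun (posP_sub_negP v) π
  have hPN : ∑ π : Setoid (Fin n), posP v π = ∑ π : Setoid (Fin n), negP v π := by
    have h2 : ∑ π : Setoid (Fin n), (posP v π - negP v π) = 0 := by
      rw [Finset.sum_congr rfl fun π _ => hps π]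
      exact hsum
    rw [Finset.sum_sub_distrib] at h2
    linarith
  obtain ⟨π₀, hπ₀⟩ := Function.ne_iff.mp hv
  have hc : 0 < ∑ π : Setoid (Fin n), posP v π := by
    rcases lt_or_gt_of_ne hπ₀ with h | h
    · have h1 : negP v π₀ ≤ ∑ π : Setoid (Fin n), negP v π :=
        Finset.single_le_sum (f := negP v) (fun π _ => le_max_right _ _) (Finset.mem_univ _)
      have h2 : 0 < negP v π₀ := lt_of_lt_of_le (by simpa using h) (le_max_left _ _)
      rw [hPN]
      linarith
    · have h1 : posP v π₀ ≤ ∑ π : Setoid (Fin n), posP v π :=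
        Finset.single_le_sum (f := posP v) (fun π _ => le_max_right _ _) (Finset.mem_univ _)
      have h2 : 0 < posP v π₀ := lt_of_lt_of_le (by simpa using h) (le_max_left _ _)
      linarith
  refine ⟨∑ π : Setoid (Fin n), posP v π, (∑ π : Setoid (Fin n), posP v π)⁻¹ • posP v,
    (∑ π : Setoid (Fin n), posP v π)⁻¹ • negP v, hc, ⟨?_, ?_⟩, ⟨?_, ?_⟩, ?_, ?_, ?_, ?_⟩
  · intro π
    exact mul_nonneg (inv_nonneg.2 hc.le) (le_max_right _ _)
  · simp only [Pi.smul_apply, smul_eq_mul]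
    rw [← Finset.mul_sum]
    exact inv_mul_cancel₀ hc.ne'
  · intro π
    exact mul_nonneg (inv_nonneg.2 hc.le) (le_max_right _ _)
  · simp only [Pi.smul_apply, smul_eq_mul]
    rw [← Finset.mul_sum, ← hPN]
    exact inv_mul_cancel₀ hc.ne'
  · intro h
    apply hv
    have h2 : posP v = negP v := smul_right_injective _ (inv_ne_zero hc.ne') h
    rw [← posP_sub_negP v, h2, sub_self]
  · intro π
    rcases le_total (v π) 0 with h | h
    · left
      simp only [Pi.smul_apply, smul_eq_mul, posP, max_eq_right h, mul_zero]
    · right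
      simp only [Pi.smul_apply, smul_eq_mul, negP, max_eq_right (by linarith : -v π ≤ 0),
        mul_zero]
  · have h2 : PhiLin n p ((∑ π : Setoid (Fin n), posP v π)⁻¹ • posP v)
        = PhiLin n p ((∑ π : Setoid (Fin n), posP v π)⁻¹ • negP v) := by
      apply sub_eq_zero.mp
      rw [← map_sub, ← smul_sub, posP_sub_negP, map_smul, hker, smul_zero]
    rw [← PhiLin_apply, ← PhiLin_apply]
    exact h2
  · rw [← smul_sub, posP_sub_negP, smul_smul, mul_inv_cancel₀ hc.ne', one_smul]

end AuxST

/-- **Proposition (Steif–Tykesson, Proposition 2.3).**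
Let `n ≥ 2`, `p ∈ (0,1)` and let `Φ_p^*` denote the linear extension of `Φ_p` to signed
measures on `Part_[n]`.  Then:
(i) `Φ_p` is injective on `RER_[n]` iff `Ker(Φ_p^*) = {0}`;
(ii) `ν ∈ RER_[n]` fails to be `(RER_[n],p)`-unique iff there is a nonzero
     `v ∈ Ker(Φ_p^*)` which is nonnegative outside the support of `ν`;
(iii) if `dim Ker(Φ_p^*) = 1` then there is a unique unordered pair of mutually singular
      `ν₁ ≠ ν₂ ∈ RER_[n]` with `Φ_p(ν₁) = Φ_p(ν₂)`;
(iv) if `dim Ker(Φ_p^*) ≥ 2` then there are infinitely many such pairs. -/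

theorem kernel_characterization_of_nonuniqueness
    (n : ℕ) (hn : 2 ≤ n) (p : ℝ) (hp0 : 0 < p) (hp1 : p < 1) :
    ((∀ ν₁ ν₂ : Setoid (Fin n) → ℝ, IsRER n ν₁ → IsRER n ν₂ →
        Phi n p ν₁ = Phi n p ν₂ → ν₁ = ν₂) ↔ LinearMap.ker (PhiLin n p) = ⊥) ∧
    (∀ ν : Setoid (Fin n) → ℝ, IsRER n ν →
      ((∃ ν' : Setoid (Fin n) → ℝ, IsRER n ν' ∧ ν' ≠ ν ∧ Phi n p ν' = Phi n p ν) ↔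
        ∃ v : Setoid (Fin n) → ℝ, v ∈ LinearMap.ker (PhiLin n p) ∧ v ≠ 0 ∧
          ∀ π : Setoid (Fin n), π ∉ {π' | 0 < ν π'} → 0 ≤ v π)) ∧
    (Module.finrank ℝ (LinearMap.ker (PhiLin n p)) = 1 →
      ∃ ν₁ ν₂ : Setoid (Fin n) → ℝ, IsRER n ν₁ ∧ IsRER n ν₂ ∧ ν₁ ≠ ν₂ ∧
        (∀ π, ν₁ π = 0 ∨ ν₂ π = 0) ∧ Phi n p ν₁ = Phi n p ν₂ ∧
        ∀ ν₁' ν₂' : Setoid (Fin n) → ℝ, IsRER n ν₁' → IsRER n ν₂' → ν₁' ≠ ν₂' →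
          (∀ π, ν₁' π = 0 ∨ ν₂' π = 0) → Phi n p ν₁' = Phi n p ν₂' →
          ((ν₁' = ν₁ ∧ ν₂' = ν₂) ∨ (ν₁' = ν₂ ∧ ν₂' = ν₁))) ∧
    (2 ≤ Module.finrank ℝ (LinearMap.ker (PhiLin n p)) →
      {q : (Setoid (Fin n) → ℝ) × (Setoid (Fin n) → ℝ) |
        IsRER n q.1 ∧ IsRER n q.2 ∧ q.1 ≠ q.2 ∧ (∀ π, q.1 π = 0 ∨ q.2 π = 0) ∧
        Phi n p q.1 = Phi n p q.2}.Infinite) := by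
  refine ⟨?_, ?_, ?_, ?_⟩
  · -- (i)
    constructor
    · intro hinj
      rw [Submodule.eq_bot_iff]
      intro v hvker
      by_contra hv
      obtain ⟨c, ν₁, ν₂, hc, h1, h2, hne, hdisj, hPhi, heq⟩ :=
        mk_pair (LinearMap.mem_ker.mp hvker) hv
      exact hne (hinj ν₁ ν₂ h1 h2 hPhi)
    · intro hbot ν₁ ν₂ _ _ hPhi
      apply LinearMap.ker_eq_bot.mp hbot
      rw [PhiLin_apply, PhiLin_apply]
      exact hPhi
  · -- (ii)
    intro ν hν
    constructor
    · rintro ⟨ν', hν', hne, hPhi⟩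
      refine ⟨ν' - ν, ?_, sub_ne_zero.mpr hne, ?_⟩
      · rw [LinearMap.mem_ker, map_sub, PhiLin_apply, PhiLin_apply, hPhi, sub_self]
      · intro π hπ
        have hπ' : ¬ 0 < ν π := hπ
        have h0 : ν π = 0 := le_antisymm (not_lt.mp hπ') (hν.1 π)
        simp only [Pi.sub_apply, h0, sub_zero]
        exact hν'.1 π
    · rintro ⟨v, hvker, hvne, hvpos⟩
      have hSpos : ∀ π ∈ Finset.univ.filter (fun π : Setoid (Fin n) => v π < 0),
          0 < ν π / (-v π) := by
        intro π hπ
        have hvπ : v π < 0 := (Finset.mem_filter.mp hπ).2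
        have hνπ : 0 < ν π := by
          by_contra h
          have := hvpos π h
          linarith
        exact div_pos hνπ (by linarith)
      set S := Finset.univ.filter (fun π : Setoid (Fin n) => v π < 0) with hSdef
      set ε : ℝ := if hSne : S.Nonempty then min 1 (S.inf' hSne (fun π => ν π / (-v π)))
        else 1 with hε
      have hεpos : 0 < ε := by
        rw [hε]
        split_ifs with hSne
        · refine lt_min one_pos ?_
          rw [Finset.lt_inf'_iff]
          intro π hπ
          exact hSpos π hπ
        · exact one_pos
      have hεle : ∀ π ∈ S, ε ≤ ν π / (-v π) := by
        intro π hπ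
        rw [hε, dif_pos ⟨π, hπ⟩]
        exact le_trans (min_le_right _ _) (Finset.inf'_le _ hπ)
      refine ⟨ν + ε • v, ⟨?_, ?_⟩, ?_, ?_⟩
      · intro π
        simp only [Pi.add_apply, Pi.smul_apply, smul_eq_mul]
        rcases le_or_gt 0 (v π) with h | h
        · have := hν.1 π
          nlinarith
        · have hπS : π ∈ S := Finset.mem_filter.mpr ⟨Finset.mem_univ _, h⟩
          have h2 := hεle π hπS
          rw [le_div_iff₀ (by linarith : (0:ℝ) < -v π)] at h2
          nlinarith
      · simp only [Pi.add_apply, Pi.smul_apply, smul_eq_mul]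
        rw [Finset.sum_add_distrib, hν.2, ← Finset.mul_sum,
          sum_eq_zero_of_ker (LinearMap.mem_ker.mp hvker), mul_zero, add_zero]
      · intro h
        have h0 : ε • v = 0 := add_eq_left.mp h
        rcases smul_eq_zero.mp h0 with h' | h'
        · exact hεpos.ne' h'
        · exact hvne h'
      · have hl : PhiLin n p (ν + ε • v) = PhiLin n p ν := by
          rw [map_add, map_smul, LinearMap.mem_ker.mp hvker, smul_zero, add_zero]
        rw [← PhiLin_apply, ← PhiLin_apply]
        exact hl
  · -- (iii)
    intro hrank
    obtain ⟨v, hv0, hspan⟩ := finrank_eq_one_iff'.mp hrank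
    have hker : PhiLin n p (v : Setoid (Fin n) → ℝ) = 0 := v.2
    have hvne : (v : Setoid (Fin n) → ℝ) ≠ 0 := fun h => hv0 (Subtype.ext h)
    obtain ⟨c, ν₁, ν₂, hc, h1, h2, hne, hdisj, hPhi, heq⟩ := mk_pair hker hvne
    refine ⟨ν₁, ν₂, h1, h2, hne, hdisj, hPhi, ?_⟩
    intro ν₁' ν₂' h1' h2' hne' hdisj' hPhi'
    have hwker : ν₁' - ν₂' ∈ LinearMap.ker (PhiLin n p) := by
      rw [LinearMap.mem_ker, map_sub, PhiLin_apply, PhiLin_apply, hPhi', sub_self]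
    obtain ⟨t, ht⟩ := hspan ⟨ν₁' - ν₂', hwker⟩
    have htw : t • (v : Setoid (Fin n) → ℝ) = ν₁' - ν₂' := congrArg Subtype.val ht
    have hw : ν₁' - ν₂' = (t * c) • (ν₁ - ν₂) := by
      rw [← htw, heq, smul_smul]
    have hd1 := pair_decomp h1.1 h2.1 hdisj
    have hd1' := pair_decomp h1'.1 h2'.1 hdisj'
    have hrne : t * c ≠ 0 := by
      intro h0
      rw [h0, zero_smul] at hw
      exact hne' (sub_eq_zero.mp hw)
    rcases hrne.lt_or_gt with hrneg | hrpos
    · right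
      have e1 : ν₁' = (-(t * c)) • ν₂ := by
        rw [← hd1'.1, hw, posP_smul_neg hrneg.le, hd1.2]
      have e2 : ν₂' = (-(t * c)) • ν₁ := by
        rw [← hd1'.2, hw, negP_smul_neg hrneg.le, hd1.1]
      have hsum1 : (1:ℝ) = -(t * c) := by
        have hs := h1'.2
        rw [e1] at hs
        simp only [Pi.smul_apply, smul_eq_mul] at hs
        rw [← Finset.mul_sum, h2.2, mul_one] at hs
        linarith
      exact ⟨by rw [e1, ← hsum1, one_smul], by rw [e2, ← hsum1, one_smul]⟩
    · left
      have e1 : ν₁' = (t * c) • ν₁ := by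
        rw [← hd1'.1, hw, posP_smul hrpos.le, hd1.1]
      have e2 : ν₂' = (t * c) • ν₂ := by
        rw [← hd1'.2, hw, negP_smul hrpos.le, hd1.2]
      have hsum1 : (1:ℝ) = t * c := by
        have hs := h1'.2
        rw [e1] at hs
        simp only [Pi.smul_apply, smul_eq_mul] at hs
        rw [← Finset.mul_sum, h1.2, mul_one] at hs
        linarith
      exact ⟨by rw [e1, ← hsum1, one_smul], by rw [e2, ← hsum1, one_smul]⟩
  · -- (iv)
    intro hrank
    have hker_ne : LinearMap.ker (PhiLin n p) ≠ ⊥ := by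
      intro h
      rw [h, finrank_bot] at hrank
      omega
    obtain ⟨v, hvker, hvne⟩ := (LinearMap.ker (PhiLin n p)).ne_bot_iff.mp hker_ne
    have hnotle : ¬ LinearMap.ker (PhiLin n p) ≤ Submodule.span ℝ {v} := by
      intro hle
      have h1 : Module.finrank ℝ (LinearMap.ker (PhiLin n p))
          ≤ Module.finrank ℝ (Submodule.span ℝ {v}) := Submodule.finrank_mono hle
      rw [finrank_span_singleton hvne] at h1
      omega
    obtain ⟨w, hwker, hwns⟩ := SetLike.not_le_iff_exists.mp hnotle
    clear hnotle
    have hpairs : ∀ s : ℝ, ∃ (c : ℝ) (ν₁ ν₂ : Setoid (Fin n) → ℝ), 0 < c ∧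
        IsRER n ν₁ ∧ IsRER n ν₂ ∧ ν₁ ≠ ν₂ ∧ (∀ π, ν₁ π = 0 ∨ ν₂ π = 0) ∧
        Phi n p ν₁ = Phi n p ν₂ ∧ v + s • w = c • (ν₁ - ν₂) := by
      intro s
      apply mk_pair
      · exact LinearMap.mem_ker.mp (add_mem hvker (Submodule.smul_mem _ _ hwker))
      · intro h0
        by_cases hs : s = 0
        · rw [hs, zero_smul, add_zero] at h0
          exact hvne h0
        · apply hwns
          rw [Submodule.mem_span_singleton]
          refine ⟨-s⁻¹, ?_⟩
          have hsw : s • w = -v := by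
            rw [add_eq_zero_iff_eq_neg] at h0
            rw [eq_comm, neg_eq_iff_eq_neg] at h0
            rw [← h0]
          have : w = s⁻¹ • (-v) := by
            rw [← hsw, smul_smul, inv_mul_cancel₀ hs, one_smul]
          rw [this, smul_neg, neg_smul]
    choose c ν₁ ν₂ hc h1 h2 hne hdisj hPhi heq using hpairs
    apply Set.infinite_of_injective_forall_mem (f := fun s : ℝ => (ν₁ s, ν₂ s))
    · intro s s' hss
      have e1 : ν₁ s = ν₁ s' := congrArg Prod.fst hss
      have e2 : ν₂ s = ν₂ s' := congrArg Prod.snd hss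
      have key : c s' • (v + s • w) = c s • (v + s' • w) := by
        rw [heq s, heq s', ← e1, ← e2, smul_smul, smul_smul, mul_comm]
      have key2 : (c s' - c s) • v = (c s * s' - c s' * s) • w := by
        rw [sub_smul, sub_smul, sub_eq_sub_iff_add_eq_add]
        simp only [smul_add, smul_smul] at key
        rw [mul_comm (c s) s', mul_comm (c s') s] at key ⊢
        linear_combination (norm := module) key
      by_cases hb : c s * s' - c s' * s = 0
      · rw [hb, zero_smul] at key2
        have hcc : c s' - c s = 0 := by
          rcases smul_eq_zero.mp key2 with h' | h'
          · exact h'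
          · exact absurd h' hvne
        have hce : c s' = c s := by linarith
        rw [hce] at hb
        have : c s * (s' - s) = 0 := by ring_nf; linarith [hb]
        rcases mul_eq_zero.mp this with h' | h'
        · exact absurd h' (hc s).ne'
        · linarith
      · exfalso
        apply hwns
        rw [Submodule.mem_span_singleton]
        refine ⟨(c s * s' - c s' * s)⁻¹ * (c s' - c s), ?_⟩
        rw [mul_smul, key2, smul_smul, inv_mul_cancel₀ hb, one_smul]
    · intro s
      exact ⟨h1 s, h2 s, hne s, hdisj s, hPhi s⟩
end
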